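/- arXiv:2412.08400 — 3 statements merged into one kernel-verified Lean document; each statement's English description precedes it below -/
import Mathlib

section
/- Assume W_κ(Y,E) is nonempty. For every P ∈ W(Y,E), P belongs to the exponential hull ehull(W_κ(Y,E)) if and only if log P belongs to the sum of subspaces span(G_κ(Y,E)) + N(Y,E) inside F(Y,E). -/
open Finset

variable {Y X : Type*}

/-- `F ∈ F(Y,E)` : matrices supported on the edge set `E`. -/
def MemF (E : Set (Y × Y)) (F : Y → Y → ℝ) : Prop :=
  ∀ y y' : Y, (y, y') ∉ E → F y y' = 0

/-- `F ∈ F⁺(Y,E)` : member of `F(Y,E)` positive on every edge of `E`. -/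
def MemFpos (E : Set (Y × Y)) (F : Y → Y → ℝ) : Prop :=
  MemF E F ∧ ∀ y y' : Y, (y, y') ∈ E → 0 < F y y'

/-- Every row sums to `1`. -/
def RowStochastic [Fintype Y] (F : Y → Y → ℝ) : Prop :=
  ∀ y : Y, ∑ y' : Y, F y y' = 1

/-- `F ∈ W(Y,E)` : row-stochastic members of `F⁺(Y,E)`. -/
def MemW [Fintype Y] (E : Set (Y × Y)) (F : Y → Y → ℝ) : Prop :=
  MemFpos E F ∧ RowStochastic F

/-- The lumped edge set `D = κ₂(E) = {(κ y, κ y') : (y,y') ∈ E}`. -/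
def lumpedEdges (E : Set (Y × Y)) (κ : Y → X) : Set (X × X) :=
  {p | ∃ q ∈ E, κ q.1 = p.1 ∧ κ q.2 = p.2}

/-- `blockSum κ F y x' = Σ_{y' ∈ S_{x'}} F y y'`. -/
def blockSum [Fintype Y] [DecidableEq X] (κ : Y → X) (F : Y → Y → ℝ) (y : Y) (x' : X) : ℝ :=
  ∑ y' ∈ Finset.univ.filter (fun y' => κ y' = x'), F y y'

/-- Kemeny–Snell `κ`-lumpability of a matrix `F`. -/
def Lumpable [Fintype Y] [DecidableEq X] (E : Set (Y × Y)) (κ : Y → X) (F : Y → Y → ℝ) : Prop :=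
  ∀ x x' : X, (x, x') ∈ lumpedEdges E κ →
    ∀ y₁ y₂ : Y, κ y₁ = x → κ y₂ = x → blockSum κ F y₁ x' = blockSum κ F y₂ x'

/-- `W_κ(Y,E)` : the set of `κ`-lumpable irreducible stochastic matrices. -/
def Wkappa [Fintype Y] [DecidableEq X] (E : Set (Y × Y)) (κ : Y → X) : Set (Y → Y → ℝ) :=
  {P | MemW E P ∧ Lumpable E κ P}

/-- Strong connectivity of the digraph with edge set `E`. -/
def StronglyConnected {V : Type*} (E : Set (V × V)) : Prop :=
  ∀ v v' : V, Relation.ReflTransGen (fun a b => (a, b) ∈ E) v v'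

/-- Hadamard geometric combination `F₀^{⊙(1−t)} ⊙ F₁^{⊙t}` (entries off `E` set to `0`). -/
noncomputable def hadGeom (E : Set (Y × Y)) (F₀ F₁ : Y → Y → ℝ) (t : ℝ) : Y → Y → ℝ :=
  fun y y' => E.indicator (fun p => F₀ p.1 p.2 ^ (1 - t) * F₁ p.1 p.2 ^ t) (y, y')

/-- `Q` is an s-normalization of `F`. -/
def IsSNorm [Fintype Y] (F Q : Y → Y → ℝ) : Prop :=
  ∃ (ρ : ℝ) (v : Y → ℝ), 0 < ρ ∧ (∀ y, 0 < v y) ∧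
    (∀ y y' : Y, Q y y' = F y y' * v y' / (ρ * v y)) ∧ RowStochastic Q

/-- e-geodesic closedness of a family `V ⊆ W(Y,E)`. -/
def EGeodClosed [Fintype Y] (E : Set (Y × Y)) (V : Set (Y → Y → ℝ)) : Prop :=
  ∀ P₀ ∈ V, ∀ P₁ ∈ V, ∀ (t : ℝ) (Q : Y → Y → ℝ),
    IsSNorm (hadGeom E P₀ P₁ t) Q → Q ∈ V

/-- `(x,x')` is a merging block of `(Y,E)` with respect to `κ`. -/
def MergingBlock (E : Set (Y × Y)) (κ : Y → X) (x x' : X) : Prop :=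
  ∃ y y₁' y₂' : Y, κ y = x ∧ κ y₁' = x' ∧ κ y₂' = x' ∧ y₁' ≠ y₂' ∧
    (y, y₁') ∈ E ∧ (y, y₂') ∈ E

/-- `(x,x')` is a multi-row merging block: a merging block with `|S_x| ≥ 2`. -/
def MultiRowMergingBlock (E : Set (Y × Y)) (κ : Y → X) (x x' : X) : Prop :=
  MergingBlock E κ x x' ∧ ∃ y₁ y₂ : Y, y₁ ≠ y₂ ∧ κ y₁ = x ∧ κ y₂ = x

/-- Entrywise logarithm on `E`, zero off `E`. -/
noncomputable def logMat (E : Set (Y × Y)) (F : Y → Y → ℝ) : Y → Y → ℝ :=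
  fun y y' => E.indicator (fun p => Real.log (F p.1 p.2)) (y, y')

/-- Entrywise exponential on `E`, zero off `E`. -/
noncomputable def expMat (E : Set (Y × Y)) (G : Y → Y → ℝ) : Y → Y → ℝ :=
  fun y y' => E.indicator (fun p => Real.exp (G p.1 p.2)) (y, y')

/-- `G_κ(Y,E) = { log F : F ∈ F_κ⁺(Y,E) }`. -/
def Gkappa [Fintype Y] [DecidableEq X] (E : Set (Y × Y)) (κ : Y → X) : Set (Y → Y → ℝ) :=
  {G | ∃ F : Y → Y → ℝ, MemFpos E F ∧ Lumpable E κ F ∧ G = logMat E F}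

/-- `N(Y,E)`: matrices of the form `(y,y') ↦ f y' - f y + c` on `E`, zero off `E`. -/
def Nset (E : Set (Y × Y)) : Set (Y → Y → ℝ) :=
  {N | MemF E N ∧ ∃ (f : Y → ℝ) (c : ℝ), ∀ y y' : Y, (y, y') ∈ E → N y y' = f y' - f y + c}

/-- The exponential hull of a family `V ⊆ W(Y,E)`: all s-normalizations of entrywise
exponentials of affine combinations of logarithms of members of `V`. -/
def eHull [Fintype Y] (E : Set (Y × Y)) (V : Set (Y → Y → ℝ)) : Set (Y → Y → ℝ) :=
  {Q | ∃ (k : ℕ) (α : Fin k → ℝ) (P : Fin k → Y → Y → ℝ),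
    (∑ i, α i) = 1 ∧ (∀ i, P i ∈ V) ∧
    IsSNorm (expMat E (fun y y' => ∑ i, α i * logMat E (P i) y y')) Q}


lemma lemC {X : Type*} [Fintype X] (D : Set (X × X))
    (hconn : ∀ x x' : X, Relation.ReflTransGen (fun a b => (a, b) ∈ D) x x')
    (g : X → ℝ) :
    ∃ (f : X → ℝ) (c : ℝ), ∀ x x', (x, x') ∈ D → (∀ x'', (x, x'') ∈ D → x'' = x') →
      g x = f x' - f x + c := by
  classical
  set S : Set X := {x | ∃ x', (x, x') ∈ D ∧ ∀ x'', (x, x'') ∈ D → x'' = x'} with hS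
  let nxt : X → X := fun x => if h : x ∈ S then h.choose else x
  have hnxt1 : ∀ x ∈ S, (x, nxt x) ∈ D := by
    intro x hx; simp only [nxt, dif_pos hx]; exact hx.choose_spec.1
  have hnxt2 : ∀ x ∈ S, ∀ x'', (x, x'') ∈ D → x'' = nxt x := by
    intro x hx x'' h; simp only [nxt, dif_pos hx]; exact hx.choose_spec.2 x'' h
  have hnxt3 : ∀ x, x ∉ S → nxt x = x := by
    intro x hx; simp only [nxt, dif_neg hx]
  suffices h : ∃ (f : X → ℝ) (c : ℝ), ∀ x ∈ S, g x = f (nxt x) - f x + c by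
    obtain ⟨f, c, hfc⟩ := h
    refine ⟨f, c, fun x x' hD huniq => ?_⟩
    have hxS : x ∈ S := ⟨x', hD, huniq⟩
    have hx' : nxt x = x' := huniq _ (hnxt1 x hxS)
    rw [← hx']; exact hfc x hxS
  by_cases hcyc : ∃ x ∈ S, ∃ k, 1 ≤ k ∧ nxt^[k] x = x
  · -- Case 1 : there is a cycle; then the whole graph is that cycle.
    obtain ⟨x, hxS, hex⟩ := hcyc
    set n := Nat.find hex with hn
    obtain ⟨hn1, hnret⟩ : 1 ≤ n ∧ nxt^[n] x = x := Nat.find_spec hex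
    have hnmin : ∀ m, 1 ≤ m → m < n → nxt^[m] x ≠ x := by
      intro m hm1 hmn hret
      exact Nat.find_min hex hmn ⟨hm1, hret⟩
    have mult : ∀ m, nxt^[n * m] x = x := by
      intro m; induction m with
      | zero => simp
      | succ m ih =>
        have h' : n * (m + 1) = n * m + n := by ring
        rw [h', Function.iterate_add_apply, hnret, ih]
    have claimA : ∀ j, nxt^[j] x ∈ S := by
      by_contra hA
      push_neg at hA
      have hexj : ∃ j, nxt^[j] x ∉ S := hA
      have hj0spec : nxt^[Nat.find hexj] x ∉ S := Nat.find_spec hexj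
      set j₀ := Nat.find hexj with hj0
      have stab : ∀ l, j₀ ≤ l → nxt^[l] x = nxt^[j₀] x := by
        intro l hl
        induction l, hl using Nat.le_induction with
        | base => rfl
        | succ l hl ih =>
          rw [Function.iterate_succ_apply', ih, hnxt3 _ hj0spec]
      have hkey : x = nxt^[j₀] x := by
        calc x = nxt^[n * (j₀ + 1)] x := (mult (j₀ + 1)).symm
        _ = nxt^[j₀] x := stab _ (by nlinarith)
      exact hj0spec (hkey ▸ hxS)
    have reach : ∀ z, ∃ j, nxt^[j] x = z := by
      intro z
      induction hconn x z with
      | refl => exact ⟨0, rfl⟩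
      | @tail b c' hab hbc ih =>
        obtain ⟨j, hj⟩ := ih
        refine ⟨j + 1, ?_⟩
        rw [Function.iterate_succ_apply', hj]
        exact (hnxt2 b (hj ▸ claimA j) c' hbc).symm
    have hkzspec : ∀ z, nxt^[Nat.find (reach z)] x = z := fun z => Nat.find_spec (reach z)
    have period : ∀ j, nxt^[j % n] x = nxt^[j] x := by
      intro j
      conv_rhs => rw [← Nat.mod_add_div j n]
      rw [Function.iterate_add_apply, mult]
    have hkzlt : ∀ z, Nat.find (reach z) < n := by
      intro z
      have h1 : Nat.find (reach z) ≤ (Nat.find (reach z)) % n := by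
        apply Nat.find_le
        rw [period]; exact hkzspec z
      have h2 : (Nat.find (reach z)) % n < n := Nat.mod_lt _ (by omega)
      omega
    refine ⟨fun z => (∑ j ∈ range (Nat.find (reach z)), g (nxt^[j] x))
        - (Nat.find (reach z)) * ((∑ j ∈ range n, g (nxt^[j] x)) / n),
      (∑ j ∈ range n, g (nxt^[j] x)) / n, ?_⟩
    intro z hzS
    dsimp only
    set c := (∑ j ∈ range n, g (nxt^[j] x)) / (n : ℝ) with hc
    have hnc : (n : ℝ) * c = ∑ j ∈ range n, g (nxt^[j] x) := by
      rw [hc]; field_simp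
    set m := Nat.find (reach z) with hm
    have hmlt : m < n := hkzlt z
    have hz : nxt^[m] x = z := hkzspec z
    have hwit : nxt^[m + 1] x = nxt z := by
      rw [Function.iterate_succ_apply', hz]
    set l := Nat.find (reach (nxt z)) with hldef
    have hl_le : l ≤ m + 1 := Nat.find_le hwit
    have hlspec : nxt^[l] x = nxt z := hkzspec (nxt z)
    rcases eq_or_lt_of_le hl_le with hl | hl
    · rw [hl, Finset.sum_range_succ, hz]
      push_cast
      ring
    · have heq2 : nxt^[l] x = nxt^[m+1] x := by rw [hwit]; exact hlspec
      have hr : nxt^[(n - (m+1)) + l] x = x := by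
        rw [Function.iterate_add_apply, heq2, ← Function.iterate_add_apply]
        have h' : n - (m+1) + (m+1) = n := by omega
        rw [h', hnret]
      have hr0 : (n - (m+1)) + l = 0 := by
        by_contra hne
        exact hnmin _ (by omega) (by omega) hr
      have hl0 : l = 0 := by omega
      have hmn : m + 1 = n := by omega
      rw [hl0]
      simp only [Finset.range_zero, Finset.sum_empty, Nat.cast_zero, zero_mul, sub_zero]
      have hsum : ∑ j ∈ range n, g (nxt^[j] x) = (∑ j ∈ range m, g (nxt^[j] x)) + g z := by
        rw [← hz, ← hmn, Finset.sum_range_succ]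
      have hmcast : (m : ℝ) = (n : ℝ) - 1 := by
        have : ((m : ℕ) : ℝ) + 1 = ((n : ℕ) : ℝ) := by exact_mod_cast congrArg (Nat.cast : ℕ → ℝ) hmn
        linarith
      have hmc : (m : ℝ) * c = (n : ℝ) * c - c := by rw [hmcast]; ring
      linarith [hnc, hsum, hmc]
  · -- Case 2 : no cycle within S
    push_neg at hcyc
    have hex : ∀ z : X, ∃ k, nxt^[k] z ∉ S := by
      intro z
      by_contra hall
      push_neg at hall
      obtain ⟨i, j, hij, heq⟩ := Finite.exists_ne_map_eq_of_infinite (fun j : ℕ => nxt^[j] z)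
      rcases hij.lt_or_gt with h | h
      · have h2 : nxt^[j - i] (nxt^[i] z) = nxt^[i] z := by
          rw [← Function.iterate_add_apply]
          have h' : j - i + i = j := by omega
          rw [h', ← heq]
        exact hcyc _ (hall i) (j - i) (by omega) h2
      · have h2 : nxt^[i - j] (nxt^[j] z) = nxt^[j] z := by
          rw [← Function.iterate_add_apply]
          have h' : i - j + j = i := by omega
          rw [h', heq]
        exact hcyc _ (hall j) (i - j) (by omega) h2
    refine ⟨fun z => -(∑ j ∈ range (Nat.find (hex z)), g (nxt^[j] z)), 0, ?_⟩
    intro z hzS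
    dsimp only
    have h0 : nxt^[Nat.find (hex z)] z ∉ S := Nat.find_spec (hex z)
    have hn1 : 1 ≤ Nat.find (hex z) := by
      rcases Nat.eq_zero_or_pos (Nat.find (hex z)) with h | h
      · rw [h] at h0; simp only [Function.iterate_zero_apply] at h0; exact absurd hzS h0
      · exact h
    obtain ⟨w, hw⟩ : ∃ w, Nat.find (hex z) = w + 1 := ⟨Nat.find (hex z) - 1, by omega⟩
    have hkey : Nat.find (hex (nxt z)) = w := by
      apply le_antisymm
      · apply Nat.find_le
        have h2 : nxt^[w] (nxt z) = nxt^[Nat.find (hex z)] z := by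
          rw [hw, Function.iterate_succ_apply]
        rw [h2]; exact Nat.find_spec (hex z)
      · by_contra hlt
        push_neg at hlt
        have h2 : nxt^[Nat.find (hex (nxt z)) + 1] z ∉ S := by
          rw [Function.iterate_succ_apply]; exact Nat.find_spec (hex (nxt z))
        exact absurd h2 (Nat.find_min (hex z) (by omega))
    rw [hkey, hw, Finset.sum_range_succ']
    simp only [Function.iterate_succ_apply, Function.iterate_zero_apply]
    ring

set_option linter.unusedSectionVars false

namespace Stmt13

open Finset

/-! ### Generic linear-algebra helpers -/

lemma mem_of_two {V : Type*} [AddCommGroup V] [Module ℝ V] {M : Submodule ℝ V}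
    {A B : V} {α β γ δ : ℝ} (h1 : α • A + β • B ∈ M) (h2 : γ • A + δ • B ∈ M)
    (hd : α * δ - β * γ ≠ 0) : A ∈ M := by
  have key : (α * δ - β * γ) • A = δ • (α • A + β • B) - β • (γ • A + δ • B) := by
    module
  have hmem : (α * δ - β * γ) • A ∈ M := by
    rw [key]; exact M.sub_mem (M.smul_mem _ h1) (M.smul_mem _ h2)
  have h := M.smul_mem (α * δ - β * γ)⁻¹ hmem
  rwa [smul_smul, inv_mul_cancel₀ hd, one_smul] at h

lemma log_ineq {u : ℝ} (h0 : 0 < u) (h1 : u < 1) :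
    0 < Real.log (1 + u) ∧ Real.log (1 + u) < -Real.log (1 - u) := by
  constructor
  · apply Real.log_pos; linarith
  · have h2 : Real.log ((1 + u) * (1 - u)) < 0 := by
      apply Real.log_neg
      · nlinarith
      · nlinarith
    rw [Real.log_mul (by nlinarith) (by nlinarith)] at h2
    linarith

lemma logdet {p q t : ℝ} (hp : 0 < p) (hq : 0 < q) (ht : 0 < t) (h1 : t < p) (h2 : t < q) :
    Real.log (1 + t / p) * Real.log (1 + t / q)
      - Real.log (1 - t / q) * Real.log (1 - t / p) ≠ 0 := by
  obtain ⟨ha, hab⟩ := log_ineq (u := t / p) (by positivity) ((div_lt_one hp).2 h1)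
  obtain ⟨hc, hcd⟩ := log_ineq (u := t / q) (by positivity) ((div_lt_one hq).2 h2)
  have h3 : Real.log (1 + t / p) * Real.log (1 + t / q)
      < (-Real.log (1 - t / p)) * (-Real.log (1 - t / q)) :=
    mul_lt_mul'' hab hcd ha.le hc.le
  intro h
  nlinarith [h3]

/-! ### Basic facts -/

variable {Y X : Type*}

section Basics

variable [Fintype Y] [DecidableEq X] {E : Set (Y × Y)} {κ : Y → X}

lemma logMat_apply_mem {y y' : Y} (h : (y, y') ∈ E) (F : Y → Y → ℝ) :
    logMat E F y y' = Real.log (F y y') := Set.indicator_of_mem h _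

lemma logMat_apply_notMem {y y' : Y} (h : (y, y') ∉ E) (F : Y → Y → ℝ) :
    logMat E F y y' = 0 := Set.indicator_of_notMem h _

lemma memF_nonneg {F : Y → Y → ℝ} (hF : MemFpos E F) : ∀ y y', 0 ≤ F y y' := by
  intro y y'
  by_cases h : (y, y') ∈ E
  · exact (hF.2 y y' h).le
  · rw [hF.1 y y' h]

lemma edge_mem_lumped {y y' : Y} (h : (y, y') ∈ E) : (κ y, κ y') ∈ lumpedEdges E κ :=
  ⟨(y, y'), h, rfl, rfl⟩

lemma blockSum_zero_off {F : Y → Y → ℝ} (hF : MemF E F) {y : Y} {x' : X}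
    (h : (κ y, x') ∉ lumpedEdges E κ) : blockSum κ F y x' = 0 := by
  apply Finset.sum_eq_zero
  intro y' hy'
  rw [Finset.mem_filter] at hy'
  apply hF
  intro hE
  exact h (hy'.2 ▸ edge_mem_lumped hE)

lemma blockSum_congr {F : Y → Y → ℝ} (hl : Lumpable E κ F) (hFE : MemF E F)
    {y₁ y₂ : Y} (h : κ y₁ = κ y₂) (x' : X) :
    blockSum κ F y₁ x' = blockSum κ F y₂ x' := by
  by_cases hD : (κ y₁, x') ∈ lumpedEdges E κ
  · exact hl _ _ hD y₁ y₂ rfl h.symm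
  · rw [blockSum_zero_off hFE hD, blockSum_zero_off hFE (h ▸ hD)]

end Basics

section Lumped

variable [Fintype Y] [Fintype X] [DecidableEq X] {E : Set (Y × Y)} {κ : Y → X}

/-- The lumped matrix, defined through a section `sec` of `κ`. -/
noncomputable def lmat (κ : Y → X) (sec : X → Y) (F : Y → Y → ℝ) : X → X → ℝ :=
  fun x x' => blockSum κ F (sec x) x'

lemma rowsum_eq (F : Y → Y → ℝ) (y : Y) :
    ∑ y', F y y' = ∑ x', blockSum κ F y x' :=
  (Finset.sum_fiberwise_of_maps_to (fun y' _ => Finset.mem_univ (κ y')) (fun y' => F y y')).symm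

variable {sec : X → Y}

lemma lm_eq (hsec : ∀ x, κ (sec x) = x) {F : Y → Y → ℝ} (hl : Lumpable E κ F)
    (hFE : MemF E F) (y : Y) (x' : X) :
    blockSum κ F y x' = lmat κ sec F (κ y) x' :=
  blockSum_congr hl hFE (by rw [hsec]) x'

lemma lm_offD {F : Y → Y → ℝ} (hsec : ∀ x, κ (sec x) = x) (hFE : MemF E F) {x x' : X}
    (h : (x, x') ∉ lumpedEdges E κ) : lmat κ sec F x x' = 0 := by
  apply blockSum_zero_off hFE
  rw [hsec]
  exact h

lemma lm_pos (hsec : ∀ x, κ (sec x) = x) {F : Y → Y → ℝ} (hl : Lumpable E κ F)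
    (hF : MemFpos E F) {x x' : X} (hD : (x, x') ∈ lumpedEdges E κ) :
    0 < lmat κ sec F x x' := by
  obtain ⟨q, hqE, hq1, hq2⟩ := hD
  have h1 : blockSum κ F q.1 x' = lmat κ sec F x x' := by
    rw [lm_eq hsec hl hF.1 q.1 x', hq1]
  rw [← h1]
  have h2 : F q.1 q.2 ≤ blockSum κ F q.1 x' := by
    apply Finset.single_le_sum (f := fun y' => F q.1 y')
    · intro i _
      exact memF_nonneg hF q.1 i
    · exact Finset.mem_filter.2 ⟨Finset.mem_univ _, hq2⟩
  exact lt_of_lt_of_le (hF.2 q.1 q.2 hqE) h2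

lemma lm_row (hsec : ∀ x, κ (sec x) = x) {F : Y → Y → ℝ} (hF : F ∈ Wkappa E κ) (x : X) :
    ∑ x', lmat κ sec F x x' = 1 := by
  rw [show ∑ x', lmat κ sec F x x' = ∑ x', blockSum κ F (sec x) x' from rfl,
    ← rowsum_eq F (sec x)]
  exact hF.1.2 (sec x)

lemma lm_one (hsec : ∀ x, κ (sec x) = x) {F : Y → Y → ℝ} (hF : F ∈ Wkappa E κ) {x x' : X}
    (hD : (x, x') ∈ lumpedEdges E κ) (huniq : ∀ x'', (x, x'') ∈ lumpedEdges E κ → x'' = x') :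
    lmat κ sec F x x' = 1 := by
  have h1 := lm_row hsec hF x
  rw [Finset.sum_eq_single x'] at h1
  · exact h1
  · intro b _ hb
    by_cases hbD : (x, b) ∈ lumpedEdges E κ
    · exact absurd (huniq b hbD) hb
    · exact lm_offD hsec hF.1.1.1 hbD
  · intro hx'
    exact absurd (Finset.mem_univ x') hx'

lemma exists_succ_edge (hsec : ∀ x, κ (sec x) = x) {F : Y → Y → ℝ} (hF : F ∈ Wkappa E κ)
    {y : Y} {x' : X} (hD : (κ y, x') ∈ lumpedEdges E κ) :
    ∃ y', κ y' = x' ∧ (y, y') ∈ E := by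
  have h1 : blockSum κ F y x' ≠ 0 := by
    rw [lm_eq hsec hF.2 hF.1.1.1 y x']
    exact (lm_pos hsec hF.2 hF.1.1 hD).ne'
  obtain ⟨y', hy'mem, hy'⟩ := Finset.exists_ne_zero_of_sum_ne_zero h1
  refine ⟨y', (Finset.mem_filter.1 hy'mem).2, ?_⟩
  by_contra hE
  exact hy' (hF.1.1.1 _ _ hE)

lemma no_sibling_val {F : Y → Y → ℝ} (hFE : MemF E F) {y y' : Y} (hE : (y, y') ∈ E)
    (huniq : ∀ y'', (y, y'') ∈ E → κ y'' = κ y' → y'' = y') :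
    blockSum κ F y (κ y') = F y y' := by
  apply Finset.sum_eq_single y'
  · intro b hbmem hb
    have hkb : κ b = κ y' := (Finset.mem_filter.1 hbmem).2
    by_cases hbE : (y, b) ∈ E
    · exact absurd (huniq b hbE hkb) hb
    · exact hFE _ _ hbE
  · intro h
    exact absurd (show y' ∈ Finset.univ.filter (fun y'' => κ y'' = κ y') from
      Finset.mem_filter.2 ⟨Finset.mem_univ _, rfl⟩) h

end Lumped

section Core

variable [Fintype Y] [Fintype X] [DecidableEq X] {E : Set (Y × Y)} {κ : Y → X}

/-- The submodule of "normalization" matrices. -/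
def Nsub (E : Set (Y × Y)) : Submodule ℝ (Y → Y → ℝ) where
  carrier := Nset E
  add_mem' := by
    rintro a b ⟨haF, f, c, hfc⟩ ⟨hbF, f', c', hfc'⟩
    refine ⟨fun y y' h => ?_, f + f', c + c', fun y y' h => ?_⟩
    · show a y y' + b y y' = 0
      rw [haF y y' h, hbF y y' h, add_zero]
    · show a y y' + b y y' = (f + f') y' - (f + f') y + (c + c')
      rw [hfc y y' h, hfc' y y' h]
      simp only [Pi.add_apply]
      ring
  zero_mem' := ⟨fun _ _ _ => rfl, 0, 0, by intro y y' _; simp⟩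
  smul_mem' := by
    rintro r a ⟨haF, f, c, hfc⟩
    refine ⟨fun y y' h => ?_, r • f, r * c, fun y y' h => ?_⟩
    · show r * a y y' = 0
      rw [haF y y' h, mul_zero]
    · show r * a y y' = (r • f) y' - (r • f) y + r * c
      rw [hfc y y' h]
      simp only [Pi.smul_apply, smul_eq_mul]
      ring

/-- Generators : log-differences to the base point `P₀`. -/
def gens (E : Set (Y × Y)) (κ : Y → X) (P₀ : Y → Y → ℝ) : Set (Y → Y → ℝ) :=
  {G | ∃ Q ∈ Wkappa E κ, G = logMat E Q - logMat E P₀}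

/-- The big submodule `M = span(gens) ⊔ Nsub`. -/
noncomputable def Msub (E : Set (Y × Y)) (κ : Y → X) (P₀ : Y → Y → ℝ) :
    Submodule ℝ (Y → Y → ℝ) :=
  Submodule.span ℝ (gens E κ P₀) ⊔ Nsub E

/-- Single-entry indicator matrix. -/
def sgl [DecidableEq Y] (a b : Y) : Y → Y → ℝ :=
  fun y y' => if y = a ∧ y' = b then 1 else 0

open Classical in
noncomputable def pbE (E : Set (Y × Y)) (κ : Y → X) (x x' : X) : Y → Y → ℝ :=
  fun y y' => if (y, y') ∈ E ∧ κ y = x ∧ κ y' = x' then 1 else 0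

variable [DecidableEq Y]

lemma sgl_row (a b y : Y) : ∑ y', sgl a b y y' = if y = a then 1 else 0 := by
  unfold sgl
  by_cases h : y = a
  · subst h
    simp
  · simp [h]

lemma sgl_blockSum (a b : Y) (y : Y) (x' : X) :
    blockSum κ (sgl a b) y x' = if y = a ∧ κ b = x' then 1 else 0 := by
  unfold blockSum sgl
  by_cases h : y = a
  · subst h
    simp only [true_and]
    rw [Finset.sum_ite_eq' (Finset.univ.filter fun y' => κ y' = x') b (fun _ => (1:ℝ))]
    simp [Finset.mem_filter]
  · simp [h]

lemma mem_of_singles {M : Submodule ℝ (Y → Y → ℝ)} (v : Y → Y → ℝ)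
    (h : ∀ y y', v y y' ≠ 0 → sgl y y' ∈ M) : v ∈ M := by
  have hrep : v = ∑ p ∈ (univ : Finset (Y × Y)), v p.1 p.2 • sgl p.1 p.2 := by
    funext y y'
    rw [Finset.sum_apply, Finset.sum_apply]
    have hterm : ∀ p : Y × Y, (v p.1 p.2 • sgl p.1 p.2) y y' = if (y, y') = p then v y y' else 0 := by
      rintro ⟨a, b⟩
      simp only [Pi.smul_apply, smul_eq_mul, sgl]
      by_cases h1 : y = a ∧ y' = b
      · obtain ⟨rfl, rfl⟩ := h1
        simp
      · rw [if_neg h1, if_neg (fun hh => h1 (by cases hh; exact ⟨rfl, rfl⟩)), mul_zero]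
    rw [Finset.sum_congr rfl fun p _ => hterm p, Finset.sum_ite_eq]
    simp
  rw [hrep]
  apply Submodule.sum_mem
  intro p _
  by_cases hz : v p.1 p.2 = 0
  · rw [hz, zero_smul]; exact M.zero_mem
  · exact M.smul_mem _ (h p.1 p.2 hz)

open Classical in
lemma mem_of_pb {M : Submodule ℝ (Y → Y → ℝ)} (cc : X → X → ℝ)
    (h : ∀ x x', cc x x' ≠ 0 → pbE E κ x x' ∈ M) :
    (fun y y' => if (y, y') ∈ E then cc (κ y) (κ y') else 0) ∈ M := by
  have hrep : (fun y y' => if (y, y') ∈ E then cc (κ y) (κ y') else 0)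
      = ∑ p ∈ (univ : Finset (X × X)), cc p.1 p.2 • pbE E κ p.1 p.2 := by
    funext y y'
    rw [Finset.sum_apply, Finset.sum_apply]
    by_cases hE : (y, y') ∈ E
    · rw [if_pos hE]
      have hterm : ∀ p : X × X, (cc p.1 p.2 • pbE E κ p.1 p.2) y y'
          = if (κ y, κ y') = p then cc (κ y) (κ y') else 0 := by
        rintro ⟨a, b⟩
        simp only [Pi.smul_apply, smul_eq_mul, pbE]
        by_cases h1 : κ y = a ∧ κ y' = b
        · obtain ⟨h1a, h1b⟩ := h1
          rw [if_pos ⟨hE, h1a, h1b⟩, if_pos (show (κ y, κ y') = (a, b) by rw [h1a, h1b]),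
            mul_one, h1a, h1b]
        · rw [if_neg (fun hh => h1 ⟨hh.2.1, hh.2.2⟩),
            if_neg (fun hh => h1 (by cases hh; exact ⟨rfl, rfl⟩)), mul_zero]
      rw [Finset.sum_congr rfl fun p _ => hterm p, Finset.sum_ite_eq]
      simp
    · rw [if_neg hE]
      symm
      apply Finset.sum_eq_zero
      intro p _
      simp only [Pi.smul_apply, smul_eq_mul, pbE]
      rw [if_neg (fun hh => hE hh.1), mul_zero]
  rw [hrep]
  apply Submodule.sum_mem
  intro p _
  by_cases hz : cc p.1 p.2 = 0
  · rw [hz, zero_smul]; exact M.zero_mem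
  · exact M.smul_mem _ (h p.1 p.2 hz)

end Core

section Sibling

variable [Fintype Y] [Fintype X] [DecidableEq X] [DecidableEq Y]
variable {E : Set (Y × Y)} {κ : Y → X} {P₀ : Y → Y → ℝ}

lemma blockSum_pert (F G H : Y → Y → ℝ) (s : ℝ) (y : Y) (x' : X) :
    blockSum κ (fun u v => F u v + s * (G u v - H u v)) y x'
      = blockSum κ F y x' + s * (blockSum κ G y x' - blockSum κ H y x') := by
  unfold blockSum
  rw [Finset.sum_add_distrib, ← Finset.mul_sum, Finset.sum_sub_distrib]

lemma sibling_gen (hP₀ : P₀ ∈ Wkappa E κ) {y₀ a b : Y} (ha : (y₀, a) ∈ E) (hb : (y₀, b) ∈ E)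
    (hk : κ a = κ b) (hab : a ≠ b) {s : ℝ}
    (h1 : -(P₀ y₀ a) < s) (h2 : s < P₀ y₀ b) :
    Real.log (1 + s / P₀ y₀ a) • sgl y₀ a + Real.log (1 - s / P₀ y₀ b) • sgl y₀ b
      ∈ gens E κ P₀ := by
  obtain ⟨⟨⟨hPF, hPpos⟩, hPrs⟩, hPl⟩ := hP₀
  have hp0 : 0 < P₀ y₀ a := hPpos _ _ ha
  have hq0 : 0 < P₀ y₀ b := hPpos _ _ hb
  have hsgl_aa : sgl y₀ a y₀ a = (1 : ℝ) := by simp [sgl]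
  have hsgl_ba : sgl y₀ b y₀ a = (0 : ℝ) := by simp [sgl, hab]
  have hsgl_ab : sgl y₀ a y₀ b = (0 : ℝ) := by simp [sgl, Ne.symm hab]
  have hsgl_bb : sgl y₀ b y₀ b = (1 : ℝ) := by simp [sgl]
  set Q : Y → Y → ℝ := fun y y' => P₀ y y' + s * (sgl y₀ a y y' - sgl y₀ b y y') with hQdef
  have hQab : Q y₀ a = P₀ y₀ a + s := by
    show P₀ y₀ a + s * (sgl y₀ a y₀ a - sgl y₀ b y₀ a) = _
    rw [hsgl_aa, hsgl_ba]; ring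
  have hQb : Q y₀ b = P₀ y₀ b - s := by
    show P₀ y₀ b + s * (sgl y₀ a y₀ b - sgl y₀ b y₀ b) = _
    rw [hsgl_ab, hsgl_bb]; ring
  have hQo : ∀ y y', ¬(y = y₀ ∧ y' = a) → ¬(y = y₀ ∧ y' = b) → Q y y' = P₀ y y' := by
    intro y y' hna hnb
    show P₀ y y' + s * (sgl y₀ a y y' - sgl y₀ b y y') = _
    have z1 : sgl y₀ a y y' = 0 := by simp [sgl]; intro h1 h2; exact absurd ⟨h1, h2⟩ hna
    have z2 : sgl y₀ b y y' = 0 := by simp [sgl]; intro h1 h2; exact absurd ⟨h1, h2⟩ hnb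
    rw [z1, z2]; ring
  have hQpos : ∀ y y', (y, y') ∈ E → 0 < Q y y' := by
    intro y y' hE
    by_cases hc1 : y = y₀ ∧ y' = a
    · obtain ⟨rfl, rfl⟩ := hc1; rw [hQab]; linarith
    · by_cases hc2 : y = y₀ ∧ y' = b
      · obtain ⟨rfl, rfl⟩ := hc2; rw [hQb]; linarith
      · rw [hQo _ _ hc1 hc2]; exact hPpos _ _ hE
  have hQF : MemF E Q := by
    intro y y' hE
    have hna : ¬(y = y₀ ∧ y' = a) := by rintro ⟨rfl, rfl⟩; exact hE ha
    have hnb : ¬(y = y₀ ∧ y' = b) := by rintro ⟨rfl, rfl⟩; exact hE hb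
    rw [hQo _ _ hna hnb]; exact hPF _ _ hE
  have hQrs : RowStochastic Q := by
    intro y
    have e : ∑ y', Q y y'
        = (∑ y', P₀ y y') + s * ((∑ y', sgl y₀ a y y') - (∑ y', sgl y₀ b y y')) := by
      simp only [hQdef]
      rw [Finset.sum_add_distrib, ← Finset.mul_sum, Finset.sum_sub_distrib]
    rw [e, sgl_row, sgl_row, hPrs y]
    simp
  have hbs : ∀ y x', blockSum κ Q y x' = blockSum κ P₀ y x' := by
    intro y x'
    rw [hQdef, blockSum_pert P₀ (sgl y₀ a) (sgl y₀ b) s y x', sgl_blockSum, sgl_blockSum, hk]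
    simp
  have hQl : Lumpable E κ Q := by
    intro x x' hD y₁ y₂ hk1 hk2
    rw [hbs, hbs]
    exact hPl x x' hD y₁ y₂ hk1 hk2
  refine ⟨Q, ⟨⟨⟨hQF, hQpos⟩, hQrs⟩, hQl⟩, ?_⟩
  funext y y'
  simp only [Pi.add_apply, Pi.smul_apply, Pi.sub_apply, smul_eq_mul]
  by_cases hE : (y, y') ∈ E
  · rw [logMat_apply_mem hE, logMat_apply_mem hE]
    by_cases hc1 : y = y₀ ∧ y' = a
    · rw [hc1.1, hc1.2]
      rw [hsgl_aa, hsgl_ba, hQab, mul_one, mul_zero, add_zero,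
        show (1 : ℝ) + s / P₀ y₀ a = (P₀ y₀ a + s) / P₀ y₀ a by field_simp,
        Real.log_div (by linarith) hp0.ne']
    · by_cases hc2 : y = y₀ ∧ y' = b
      · rw [hc2.1, hc2.2]
        rw [hsgl_ab, hsgl_bb, hQb, mul_zero, mul_one, zero_add,
          show (1 : ℝ) - s / P₀ y₀ b = (P₀ y₀ b - s) / P₀ y₀ b by field_simp,
          Real.log_div (by linarith) hq0.ne']
      · have z1 : sgl y₀ a y y' = 0 := by simp [sgl]; intro u1 u2; exact absurd ⟨u1, u2⟩ hc1
        have z2 : sgl y₀ b y y' = 0 := by simp [sgl]; intro u1 u2; exact absurd ⟨u1, u2⟩ hc2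
        rw [z1, z2, hQo y y' hc1 hc2, mul_zero, mul_zero, add_zero, sub_self]
  · have hna : ¬(y = y₀ ∧ y' = a) := by rintro ⟨rfl, rfl⟩; exact hE ha
    have hnb : ¬(y = y₀ ∧ y' = b) := by rintro ⟨rfl, rfl⟩; exact hE hb
    have z1 : sgl y₀ a y y' = 0 := by simp [sgl]; intro u1 u2; exact absurd ⟨u1, u2⟩ hna
    have z2 : sgl y₀ b y y' = 0 := by simp [sgl]; intro u1 u2; exact absurd ⟨u1, u2⟩ hnb
    rw [logMat_apply_notMem hE, logMat_apply_notMem hE, z1, z2, mul_zero, mul_zero,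
      add_zero, sub_self]

lemma sgl_mem (hP₀ : P₀ ∈ Wkappa E κ) {y₀ a b : Y} (ha : (y₀, a) ∈ E) (hb : (y₀, b) ∈ E)
    (hk : κ a = κ b) (hab : a ≠ b) : sgl y₀ a ∈ Submodule.span ℝ (gens E κ P₀) := by
  have hp0 : 0 < P₀ y₀ a := hP₀.1.1.2 _ _ ha
  have hq0 : 0 < P₀ y₀ b := hP₀.1.1.2 _ _ hb
  have hmin : 0 < min (P₀ y₀ a) (P₀ y₀ b) := lt_min hp0 hq0
  set t := min (P₀ y₀ a) (P₀ y₀ b) / 2 with htdef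
  have ht0 : 0 < t := by rw [htdef]; linarith
  have htp : t < P₀ y₀ a := by
    rw [htdef]; have := min_le_left (P₀ y₀ a) (P₀ y₀ b); linarith
  have htq : t < P₀ y₀ b := by
    rw [htdef]; have := min_le_right (P₀ y₀ a) (P₀ y₀ b); linarith
  have g1 := Submodule.subset_span (R := ℝ)
    (sibling_gen hP₀ ha hb hk hab (s := t) (by linarith) (by linarith))
  have g2 := Submodule.subset_span (R := ℝ)
    (sibling_gen hP₀ ha hb hk hab (s := -t) (by linarith) (by linarith))
  rw [show (1 : ℝ) + -t / P₀ y₀ a = 1 - t / P₀ y₀ a by ring,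
    show (1 : ℝ) - -t / P₀ y₀ b = 1 + t / P₀ y₀ b by ring] at g2
  exact mem_of_two g1 g2 (logdet hp0 hq0 ht0 htp htq)

end Sibling

section Pullback

variable [Fintype Y] [Fintype X] [DecidableEq X] [DecidableEq Y]
variable {E : Set (Y × Y)} {κ : Y → X} {P₀ : Y → Y → ℝ}

open Classical in
lemma pbE_gen (hP₀ : P₀ ∈ Wkappa E κ) {sec : X → Y} (hsec : ∀ x, κ (sec x) = x)
    {x x' x'' : X} (hd1 : (x, x') ∈ lumpedEdges E κ) (hd2 : (x, x'') ∈ lumpedEdges E κ)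
    (hne : x' ≠ x'') {s : ℝ}
    (hs1 : -(lmat κ sec P₀ x x') < s) (hs2 : s < lmat κ sec P₀ x x'') :
    Real.log (1 + s / lmat κ sec P₀ x x') • pbE E κ x x'
      + Real.log (1 - s / lmat κ sec P₀ x x'') • pbE E κ x x'' ∈ gens E κ P₀ := by
  obtain ⟨⟨⟨hPF, hPpos⟩, hPrs⟩, hPl⟩ := hP₀
  have hP₀' : P₀ ∈ Wkappa E κ := ⟨⟨⟨hPF, hPpos⟩, hPrs⟩, hPl⟩
  have hp0 : 0 < lmat κ sec P₀ x x' := lm_pos hsec hPl ⟨hPF, hPpos⟩ hd1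
  have hq0 : 0 < lmat κ sec P₀ x x'' := lm_pos hsec hPl ⟨hPF, hPpos⟩ hd2
  set p := lmat κ sec P₀ x x' with hpdef
  set q := lmat κ sec P₀ x x'' with hqdef
  set cc : X → X → ℝ := fun z zz =>
    1 + s * ((if z = x ∧ zz = x' then 1 / p else 0)
      - (if z = x ∧ zz = x'' then 1 / q else 0)) with hccdef
  have hcc1 : cc x x' = 1 + s / p := by
    show 1 + s * ((if x = x ∧ x' = x' then 1 / p else 0)
      - (if x = x ∧ x' = x'' then 1 / q else 0)) = _
    rw [if_pos ⟨rfl, rfl⟩, if_neg (fun hh => hne hh.2)]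
    ring
  have hcc2 : cc x x'' = 1 - s / q := by
    show 1 + s * ((if x = x ∧ x'' = x' then 1 / p else 0)
      - (if x = x ∧ x'' = x'' then 1 / q else 0)) = _
    rw [if_neg (fun hh => hne hh.2.symm), if_pos ⟨rfl, rfl⟩]
    ring
  have hcco : ∀ z zz, ¬(z = x ∧ zz = x') → ¬(z = x ∧ zz = x'') → cc z zz = 1 := by
    intro z zz hna hnb
    show 1 + s * ((if z = x ∧ zz = x' then 1 / p else 0)
      - (if z = x ∧ zz = x'' then 1 / q else 0)) = _
    rw [if_neg hna, if_neg hnb]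
    ring
  have hccpos : ∀ z zz, 0 < cc z zz := by
    intro z zz
    by_cases hc1 : z = x ∧ zz = x'
    · obtain ⟨rfl, rfl⟩ := hc1
      rw [hcc1]
      have : -1 < s / p := by rw [lt_div_iff₀ hp0]; linarith
      linarith
    · by_cases hc2 : z = x ∧ zz = x''
      · obtain ⟨rfl, rfl⟩ := hc2
        rw [hcc2]
        have : s / q < 1 := by rw [div_lt_one hq0]; linarith
        linarith
      · rw [hcco z zz hc1 hc2]; norm_num
  set Q : Y → Y → ℝ := fun y y' => P₀ y y' * cc (κ y) (κ y') with hQdef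
  have hbs : ∀ y xb, blockSum κ Q y xb = lmat κ sec P₀ (κ y) xb * cc (κ y) xb := by
    intro y xb
    have e1 : blockSum κ Q y xb = blockSum κ P₀ y xb * cc (κ y) xb := by
      unfold blockSum
      rw [Finset.sum_mul]
      apply Finset.sum_congr rfl
      intro y' hy'
      rw [hQdef]
      dsimp only
      rw [(Finset.mem_filter.1 hy').2]
    rw [e1, lm_eq hsec hPl hPF y xb]
  have hQF : MemF E Q := by
    intro y y' h
    rw [hQdef]; dsimp only; rw [hPF y y' h, zero_mul]
  have hQpos : ∀ y y', (y, y') ∈ E → 0 < Q y y' := by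
    intro y y' h
    rw [hQdef]; dsimp only
    exact mul_pos (hPpos y y' h) (hccpos (κ y) (κ y'))
  have hQrs : RowStochastic Q := by
    intro y
    rw [rowsum_eq (κ := κ) Q y, Finset.sum_congr rfl (fun xb _ => hbs y xb)]
    by_cases hx : κ y = x
    · rw [hx]
      have hccx : ∀ xb, cc x xb
          = 1 + s * ((if xb = x' then 1 / p else 0) - (if xb = x'' then 1 / q else 0)) := by
        intro xb
        show 1 + s * ((if x = x ∧ xb = x' then 1 / p else 0)
          - (if x = x ∧ xb = x'' then 1 / q else 0)) = _
        simp only [true_and]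
      have expand : ∀ xb, lmat κ sec P₀ x xb * cc x xb
          = lmat κ sec P₀ x xb + s * ((if xb = x' then lmat κ sec P₀ x xb * (1 / p) else 0)
            - (if xb = x'' then lmat κ sec P₀ x xb * (1 / q) else 0)) := by
        intro xb
        rw [hccx xb]
        by_cases h1 : xb = x'
        · subst h1
          rw [if_pos rfl, if_neg hne, if_pos rfl, if_neg hne]
          ring
        · by_cases h2 : xb = x''
          · subst h2
            rw [if_neg h1, if_pos rfl, if_neg h1, if_pos rfl]
            ring
          · rw [if_neg h1, if_neg h2, if_neg h1, if_neg h2]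
            ring
      rw [Finset.sum_congr rfl (fun xb _ => expand xb), Finset.sum_add_distrib,
        ← Finset.mul_sum, Finset.sum_sub_distrib, Finset.sum_ite_eq', Finset.sum_ite_eq',
        lm_row hsec hP₀' x]
      simp only [Finset.mem_univ, if_true]
      rw [← hpdef, ← hqdef, mul_one_div, mul_one_div, div_self hp0.ne', div_self hq0.ne']
      ring
    · have hcy : ∀ xb, cc (κ y) xb = 1 :=
        fun xb => hcco (κ y) xb (fun hh => hx hh.1) (fun hh => hx hh.1)
      rw [Finset.sum_congr rfl (fun xb _ => by rw [hcy xb, mul_one])]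
      exact lm_row hsec hP₀' (κ y)
  have hQl : Lumpable E κ Q := by
    intro x₁ xb hD y₁ y₂ hk1 hk2
    rw [hbs, hbs, hk1, hk2]
  refine ⟨Q, ⟨⟨⟨hQF, hQpos⟩, hQrs⟩, hQl⟩, ?_⟩
  funext y y'
  simp only [Pi.add_apply, Pi.smul_apply, Pi.sub_apply, smul_eq_mul]
  by_cases hE : (y, y') ∈ E
  · rw [logMat_apply_mem hE, logMat_apply_mem hE]
    have hlogQ : Real.log (Q y y') = Real.log (P₀ y y') + Real.log (cc (κ y) (κ y')) := by
      rw [hQdef]; dsimp only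
      rw [Real.log_mul (hPpos y y' hE).ne' (hccpos (κ y) (κ y')).ne']
    rw [hlogQ]
    by_cases hc1 : κ y = x ∧ κ y' = x'
    · have hpb1 : pbE E κ x x' y y' = 1 := if_pos ⟨hE, hc1.1, hc1.2⟩
      have hpb2 : pbE E κ x x'' y y' = 0 := if_neg (fun hh => hne (hc1.2 ▸ hh.2.2))
      rw [hpb1, hpb2, mul_one, mul_zero, add_zero, hc1.1, hc1.2, hcc1]
      ring
    · by_cases hc2 : κ y = x ∧ κ y' = x''
      · have hpb1 : pbE E κ x x' y y' = 0 :=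
          if_neg (fun hh => hc1 ⟨hh.2.1, hh.2.2⟩)
        have hpb2 : pbE E κ x x'' y y' = 1 := if_pos ⟨hE, hc2.1, hc2.2⟩
        rw [hpb1, hpb2, mul_zero, mul_one, zero_add, hc2.1, hc2.2, hcc2]
        ring
      · have hpb1 : pbE E κ x x' y y' = 0 := if_neg (fun hh => hc1 ⟨hh.2.1, hh.2.2⟩)
        have hpb2 : pbE E κ x x'' y y' = 0 := if_neg (fun hh => hc2 ⟨hh.2.1, hh.2.2⟩)
        rw [hpb1, hpb2, mul_zero, mul_zero, add_zero, hcco (κ y) (κ y') hc1 hc2, Real.log_one]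
        ring
  · have hpb1 : pbE E κ x x' y y' = 0 := if_neg (fun hh => hE hh.1)
    have hpb2 : pbE E κ x x'' y y' = 0 := if_neg (fun hh => hE hh.1)
    rw [logMat_apply_notMem hE, logMat_apply_notMem hE, hpb1, hpb2]
    ring

open Classical in
lemma pbE_mem (hP₀ : P₀ ∈ Wkappa E κ) {sec : X → Y} (hsec : ∀ x, κ (sec x) = x)
    {x x' x'' : X} (hd1 : (x, x') ∈ lumpedEdges E κ) (hd2 : (x, x'') ∈ lumpedEdges E κ)
    (hne : x' ≠ x'') : pbE E κ x x' ∈ Submodule.span ℝ (gens E κ P₀) := by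
  have hp0 : 0 < lmat κ sec P₀ x x' := lm_pos hsec hP₀.2 hP₀.1.1 hd1
  have hq0 : 0 < lmat κ sec P₀ x x'' := lm_pos hsec hP₀.2 hP₀.1.1 hd2
  have hmin : 0 < min (lmat κ sec P₀ x x') (lmat κ sec P₀ x x'') := lt_min hp0 hq0
  set t := min (lmat κ sec P₀ x x') (lmat κ sec P₀ x x'') / 2 with htdef
  have ht0 : 0 < t := by rw [htdef]; linarith
  have htp : t < lmat κ sec P₀ x x' := by
    rw [htdef]
    have := min_le_left (lmat κ sec P₀ x x') (lmat κ sec P₀ x x'')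
    linarith
  have htq : t < lmat κ sec P₀ x x'' := by
    rw [htdef]
    have := min_le_right (lmat κ sec P₀ x x') (lmat κ sec P₀ x x'')
    linarith
  have g1 := Submodule.subset_span (R := ℝ)
    (pbE_gen hP₀ hsec hd1 hd2 hne (s := t) (by linarith) (by linarith))
  have g2 := Submodule.subset_span (R := ℝ)
    (pbE_gen hP₀ hsec hd1 hd2 hne (s := -t) (by linarith) (by linarith))
  rw [show (1 : ℝ) + -t / lmat κ sec P₀ x x' = 1 - t / lmat κ sec P₀ x x' by ring,
    show (1 : ℝ) - -t / lmat κ sec P₀ x x'' = 1 + t / lmat κ sec P₀ x x'' by ring] at g2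
  exact mem_of_two g1 g2 (logdet hp0 hq0 ht0 htp htq)

end Pullback

section KeyMemberships

variable [Fintype Y] [Fintype X] [DecidableEq X] [DecidableEq Y]
variable {E : Set (Y × Y)} {κ : Y → X} {P₀ : Y → Y → ℝ}

open Classical in
lemma logP0_mem (hP₀ : P₀ ∈ Wkappa E κ) {sec : X → Y} (hsec : ∀ x, κ (sec x) = x) :
    logMat E P₀ ∈ Msub E κ P₀ := by
  set bb : X → X → ℝ := fun z zz =>
    if ((z, zz) ∈ lumpedEdges E κ ∧ ∃ x'', (z, x'') ∈ lumpedEdges E κ ∧ x'' ≠ zz) then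
      Real.log (lmat κ sec P₀ z zz) else 0 with hbbdef
  have hB : (fun y y' => if (y, y') ∈ E then bb (κ y) (κ y') else 0) ∈ Msub E κ P₀ := by
    apply mem_of_pb bb
    intro z zz hnz
    have hcond : (z, zz) ∈ lumpedEdges E κ ∧ ∃ x'', (z, x'') ∈ lumpedEdges E κ ∧ x'' ≠ zz := by
      by_contra hcon
      apply hnz
      simp only [hbbdef]
      exact if_neg hcon
    obtain ⟨hd1, x2, hd2, hne2⟩ := hcond
    exact Submodule.mem_sup_left (pbE_mem hP₀ hsec hd1 hd2 (Ne.symm hne2))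
  have hA : (logMat E P₀ - fun y y' => if (y, y') ∈ E then bb (κ y) (κ y') else 0)
      ∈ Msub E κ P₀ := by
    apply mem_of_singles
    intro y y' hnz
    by_cases hE : (y, y') ∈ E
    · by_cases hsib : ∃ y'', (y, y'') ∈ E ∧ κ y'' = κ y' ∧ y'' ≠ y'
      · obtain ⟨y'', he2, hk2, hne2⟩ := hsib
        exact Submodule.mem_sup_left (sgl_mem hP₀ hE he2 hk2.symm (Ne.symm hne2))
      · exfalso
        apply hnz
        push_neg at hsib
        have hval : P₀ y y' = lmat κ sec P₀ (κ y) (κ y') :=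
          (no_sibling_val hP₀.1.1.1 hE hsib).symm.trans (lm_eq hsec hP₀.2 hP₀.1.1.1 y (κ y'))
        show logMat E P₀ y y' - (if (y, y') ∈ E then bb (κ y) (κ y') else 0) = 0
        rw [if_pos hE, logMat_apply_mem hE]
        by_cases hd1c : ∃ x2, (κ y, x2) ∈ lumpedEdges E κ ∧ x2 ≠ κ y'
        · have hbbv : bb (κ y) (κ y') = Real.log (lmat κ sec P₀ (κ y) (κ y')) := by
            simp only [hbbdef]
            exact if_pos ⟨edge_mem_lumped hE, hd1c⟩
          rw [hbbv, hval, sub_self]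
        · have hbbv : bb (κ y) (κ y') = 0 := by
            simp only [hbbdef]
            exact if_neg (fun hh => hd1c hh.2)
          have h1 : lmat κ sec P₀ (κ y) (κ y') = 1 := by
            apply lm_one hsec hP₀ (edge_mem_lumped hE)
            intro x2 hx2
            by_contra hx2ne
            exact hd1c ⟨x2, hx2, hx2ne⟩
          rw [hbbv, hval, h1, Real.log_one, sub_zero]
    · exfalso
      apply hnz
      show logMat E P₀ y y' - (if (y, y') ∈ E then bb (κ y) (κ y') else 0) = 0
      rw [if_neg hE, logMat_apply_notMem hE, sub_zero]
  have hsum := Submodule.add_mem _ hA hB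
  rwa [sub_add_cancel] at hsum

open Classical in
lemma pullback_mem (hP₀ : P₀ ∈ Wkappa E κ) {sec : X → Y} (hsec : ∀ x, κ (sec x) = x)
    (hconnD : ∀ x x' : X, Relation.ReflTransGen (fun a b => (a, b) ∈ lumpedEdges E κ) x x')
    (g : X → ℝ) :
    (fun y y' => if (y, y') ∈ E then g (κ y) else 0) ∈ Msub E κ P₀ := by
  obtain ⟨f, c, hfc⟩ := lemC (lumpedEdges E κ) hconnD g
  have hN : (fun y y' => if (y, y') ∈ E then f (κ y') - f (κ y) + c else 0) ∈ Nsub E :=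
    ⟨fun y y' h => if_neg h, fun y => f (κ y), c, fun y y' h => if_pos h⟩
  have hrest : (fun y y' => if (y, y') ∈ E then
      (fun z zz => g z - (f zz - f z + c)) (κ y) (κ y') else 0) ∈ Msub E κ P₀ := by
    apply mem_of_pb (fun z zz => g z - (f zz - f z + c))
    intro z zz hnz
    by_cases hD : (z, zz) ∈ lumpedEdges E κ
    · by_cases hD1 : ∃ x2, (z, x2) ∈ lumpedEdges E κ ∧ x2 ≠ zz
      · obtain ⟨x2, hdd, hnee⟩ := hD1
        exact Submodule.mem_sup_left (pbE_mem hP₀ hsec hD hdd (Ne.symm hnee))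
      · exfalso
        apply hnz
        push_neg at hD1
        have hgz := hfc z zz hD (fun x2 h => hD1 x2 h)
        show g z - (f zz - f z + c) = 0
        linarith
    · have h0 : pbE E κ z zz = 0 := by
        funext y y'
        refine if_neg (fun hh => hD ?_)
        rw [← hh.2.1, ← hh.2.2]
        exact edge_mem_lumped hh.1
      rw [h0]
      exact Submodule.zero_mem _
  have hsum : (fun y y' => if (y, y') ∈ E then g (κ y) else 0)
      = (fun y y' => if (y, y') ∈ E then
          (fun z zz => g z - (f zz - f z + c)) (κ y) (κ y') else 0)
        + (fun y y' => if (y, y') ∈ E then f (κ y') - f (κ y) + c else 0) := by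
    funext y y'
    simp only [Pi.add_apply]
    by_cases hE : (y, y') ∈ E
    · rw [if_pos hE, if_pos hE, if_pos hE]; ring
    · rw [if_neg hE, if_neg hE, if_neg hE, add_zero]
  rw [hsum]
  exact Submodule.add_mem _ hrest (Submodule.mem_sup_right hN)

open Classical in
lemma Gk_subset (hP₀ : P₀ ∈ Wkappa E κ) {sec : X → Y} (hsec : ∀ x, κ (sec x) = x)
    (hconnD : ∀ x x' : X, Relation.ReflTransGen (fun a b => (a, b) ∈ lumpedEdges E κ) x x') :
    Gkappa E κ ⊆ (Msub E κ P₀ : Set (Y → Y → ℝ)) := by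
  rintro G ⟨F, hFpos, hFl, rfl⟩
  have hrpos : ∀ y, 0 < ∑ y', F y y' := by
    intro y
    have hex : ∃ y', (y, y') ∈ E := by
      by_contra hno
      push_neg at hno
      have h0 : ∑ y', P₀ y y' = 0 :=
        Finset.sum_eq_zero (fun y' _ => hP₀.1.1.1 y y' (hno y'))
      have h1 := hP₀.1.2 y
      rw [h0] at h1
      exact zero_ne_one h1
    obtain ⟨y', hy'⟩ := hex
    have h1 : F y y' ≤ ∑ y'', F y y'' :=
      Finset.single_le_sum (fun i _ => memF_nonneg hFpos y i) (Finset.mem_univ y')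
    linarith [hFpos.2 y y' hy']
  have hrk : ∀ y, ∑ y'', F y y'' = ∑ y'', F (sec (κ y)) y'' := by
    intro y
    rw [rowsum_eq (κ := κ) F y, rowsum_eq (κ := κ) F (sec (κ y))]
    exact Finset.sum_congr rfl (fun x' _ => blockSum_congr hFl hFpos.1 (by rw [hsec]) x')
  set Q : Y → Y → ℝ := fun y y' => F y y' / (∑ y'', F y y'') with hQdef
  have hQW : Q ∈ Wkappa E κ := by
    refine ⟨⟨⟨?_, ?_⟩, ?_⟩, ?_⟩
    · intro y y' h
      rw [hQdef]; dsimp only; rw [hFpos.1 y y' h, zero_div]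
    · intro y y' h
      rw [hQdef]; dsimp only
      exact div_pos (hFpos.2 y y' h) (hrpos y)
    · intro y
      simp only [hQdef]
      rw [← Finset.sum_div]
      exact div_self (hrpos y).ne'
    · intro x x' hD y₁ y₂ hk1 hk2
      have hb : ∀ y, blockSum κ Q y x' = blockSum κ F y x' / (∑ y'', F y y'') := by
        intro y
        simp only [hQdef]
        unfold blockSum
        rw [Finset.sum_div]
      rw [hb y₁, hb y₂, hFl x x' hD y₁ y₂ hk1 hk2]
      have he : ∑ y'', F y₁ y'' = ∑ y'', F y₂ y'' := by
        rw [hrk y₁, hrk y₂, hk1, hk2]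
      rw [he]
  have hkey : logMat E F = ((logMat E Q - logMat E P₀) + logMat E P₀)
      + (fun y y' => if (y, y') ∈ E then Real.log (∑ y'', F (sec (κ y)) y'') else 0) := by
    funext y y'
    simp only [Pi.add_apply, Pi.sub_apply]
    by_cases hE : (y, y') ∈ E
    · rw [logMat_apply_mem hE F, logMat_apply_mem hE Q, logMat_apply_mem hE P₀, if_pos hE]
      have hlq : Real.log (Q y y') = Real.log (F y y') - Real.log (∑ y'', F y y'') := by
        rw [hQdef]; dsimp only
        rw [Real.log_div (hFpos.2 y y' hE).ne' (hrpos y).ne']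
      rw [hlq, ← hrk y]
      ring
    · rw [logMat_apply_notMem hE, logMat_apply_notMem hE, logMat_apply_notMem hE,
        if_neg hE]
      ring
  rw [hkey]
  refine Submodule.add_mem _ (Submodule.add_mem _ ?_ (logP0_mem hP₀ hsec))
    (pullback_mem hP₀ hsec hconnD (fun x => Real.log (∑ y'', F (sec x) y'')))
  exact Submodule.mem_sup_left (Submodule.subset_span ⟨Q, hQW, rfl⟩)

end KeyMemberships

end Stmt13

open Stmt13

/-- for `P ∈ W(Y,E)`, `P` belongs to the exponential hull of `W_κ(Y,E)` if
and only if `log P ∈ span G_κ(Y,E) + N(Y,E)`. -/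
theorem mem_eHull_iff_log_mem_span_sup [Fintype Y] [Fintype X] [DecidableEq X]
    (E : Set (Y × Y)) (κ : Y → X) (hsurj : Function.Surjective κ)
    (hconn : StronglyConnected E)
    (hne : (Wkappa E κ).Nonempty)
    (P : Y → Y → ℝ) (hP : MemW E P) :
    P ∈ eHull E (Wkappa E κ) ↔
      logMat E P ∈ Submodule.span ℝ (Gkappa E κ) ⊔ Submodule.span ℝ (Nset E) := by
  classical
  obtain ⟨P₀, hP₀⟩ := hne
  constructor
  · rintro ⟨k, α, PP, hsum1, hmem, hsn⟩
    obtain ⟨ρ, v, hρ, hv, heq, hst⟩ := hsn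
    set N : Y → Y → ℝ := logMat E P - ∑ i, α i • logMat E (PP i) with hNdef
    have hNapp : ∀ y y', N y y' = logMat E P y y' - ∑ i, α i * logMat E (PP i) y y' := by
      intro y y'
      simp only [hNdef, Pi.sub_apply, Finset.sum_apply, Pi.smul_apply, smul_eq_mul]
    have hNmem : N ∈ Nset E := by
      refine ⟨?_, fun y => Real.log (v y), -Real.log ρ, ?_⟩
      · intro y y' hE
        rw [hNapp, logMat_apply_notMem hE]
        have hz : ∀ i, logMat E (PP i) y y' = 0 := fun i => logMat_apply_notMem hE _
        simp [hz]
      · intro y y' hE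
        have hPpos := hP.1.2 y y' hE
        have hGexp : expMat E (fun u u' => ∑ i, α i * logMat E (PP i) u u') y y'
            = Real.exp (∑ i, α i * logMat E (PP i) y y') := Set.indicator_of_mem hE _
        have h1 := heq y y'
        rw [hGexp] at h1
        have h2 : Real.log (P y y')
            = (∑ i, α i * logMat E (PP i) y y')
              + Real.log (v y') - Real.log ρ - Real.log (v y) := by
          rw [h1, Real.log_div (mul_pos (Real.exp_pos _) (hv y')).ne'
              (mul_pos hρ (hv y)).ne',
            Real.log_mul (Real.exp_ne_zero _) (hv y').ne', Real.log_exp,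
            Real.log_mul hρ.ne' (hv y).ne']
          ring
        rw [hNapp, logMat_apply_mem hE, h2]
        ring
    have hrw : logMat E P = (∑ i, α i • logMat E (PP i)) + N := by
      rw [hNdef]; abel
    rw [hrw]
    refine Submodule.add_mem _ (Submodule.mem_sup_left ?_)
      (Submodule.mem_sup_right (Submodule.subset_span hNmem))
    apply Submodule.sum_mem
    intro i _
    exact Submodule.smul_mem _ _
      (Submodule.subset_span ⟨PP i, (hmem i).1.1, (hmem i).2, rfl⟩)
  · intro hlog
    obtain ⟨sec, hsec⟩ : ∃ sec : X → Y, ∀ x, κ (sec x) = x :=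
      ⟨Function.surjInv hsurj, fun x => Function.surjInv_eq hsurj x⟩
    have hconnD : ∀ x x' : X,
        Relation.ReflTransGen (fun a b => (a, b) ∈ lumpedEdges E κ) x x' := by
      intro x x'
      have key : ∀ ya yb : Y, Relation.ReflTransGen (fun a b => (a, b) ∈ E) ya yb →
          Relation.ReflTransGen (fun a b => (a, b) ∈ lumpedEdges E κ) (κ ya) (κ yb) := by
        intro ya yb h
        induction h with
        | refl => exact Relation.ReflTransGen.refl
        | tail hab hbc ih => exact ih.tail (edge_mem_lumped hbc)
      have h := key _ _ (hconn (sec x) (sec x'))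
      rwa [hsec, hsec] at h
    have hPM : logMat E P ∈ Msub E κ P₀ := by
      have hle : Submodule.span ℝ (Gkappa E κ) ⊔ Submodule.span ℝ (Nset E)
          ≤ Msub E κ P₀ := by
        apply sup_le
        · exact Submodule.span_le.mpr (Gk_subset hP₀ hsec hconnD)
        · exact Submodule.span_le.mpr (fun n hn => Submodule.mem_sup_right hn)
      exact hle hlog
    have hdiff : logMat E P - logMat E P₀
        ∈ Submodule.span ℝ (gens E κ P₀) ⊔ Nsub E :=
      Submodule.sub_mem _ hPM (logP0_mem hP₀ hsec)
    obtain ⟨vv, hvv, nn, hnn, hadd⟩ := Submodule.mem_sup.1 hdiff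
    rw [Submodule.mem_span_set'] at hvv
    obtain ⟨m, coef, gen, hgen⟩ := hvv
    have hgen2 : ∀ i : Fin m, ∃ Q ∈ Wkappa E κ,
        (gen i : Y → Y → ℝ) = logMat E Q - logMat E P₀ := fun i => (gen i).2
    choose QQ hQQ hQeq using hgen2
    obtain ⟨hnnF, f₀, c₀, hnval⟩ := hnn
    set αs : Fin (m + 1) → ℝ := Fin.snoc coef (1 - ∑ i, coef i) with hαs
    set PPP : Fin (m + 1) → Y → Y → ℝ := Fin.snoc QQ P₀ with hPPP
    refine ⟨m + 1, αs, PPP, ?_, ?_, ?_⟩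
    · rw [Fin.sum_univ_castSucc]
      simp only [hαs, Fin.snoc_castSucc, Fin.snoc_last]
      ring
    · intro i
      induction i using Fin.lastCases with
      | last => simpa only [hPPP, Fin.snoc_last] using hP₀
      | cast j => simpa only [hPPP, Fin.snoc_castSucc] using hQQ j
    · have hGval : ∀ y y',
          (∑ i, αs i * logMat E (PPP i) y y')
            = vv y y' + logMat E P₀ y y' := by
        intro y y'
        rw [Fin.sum_univ_castSucc]
        simp only [hαs, hPPP, Fin.snoc_castSucc, Fin.snoc_last]
        have h1 : vv y y' = ∑ i, coef i * (logMat E (QQ i) y y' - logMat E P₀ y y') := by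
          conv_lhs => rw [← hgen]
          rw [Finset.sum_apply, Finset.sum_apply]
          refine Finset.sum_congr rfl (fun i _ => ?_)
          simp only [Pi.smul_apply, smul_eq_mul, hQeq i, Pi.sub_apply]
        rw [h1]
        have h2 : ∑ i, coef i * (logMat E (QQ i) y y' - logMat E P₀ y y')
            = (∑ i, coef i * logMat E (QQ i) y y')
              - (∑ i, coef i) * logMat E P₀ y y' := by
          rw [Finset.sum_mul, ← Finset.sum_sub_distrib]
          exact Finset.sum_congr rfl (fun i _ => by ring)
        rw [h2]
        ring
      refine ⟨Real.exp (-c₀), fun y => Real.exp (f₀ y), Real.exp_pos _,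
        fun y => Real.exp_pos _, ?_, hP.2⟩
      intro y y'
      by_cases hE : (y, y') ∈ E
      · have hadd2 : vv y y' + nn y y' = logMat E P y y' - logMat E P₀ y y' := by
          have h3 := congrFun (congrFun hadd y) y'
          simpa using h3
        have hlogP : Real.log (P y y')
            = (vv y y' + logMat E P₀ y y') + (f₀ y' - f₀ y + c₀) := by
          have h4 : logMat E P y y' = Real.log (P y y') := logMat_apply_mem hE P
          have h5 : nn y y' = f₀ y' - f₀ y + c₀ := hnval y y' hE
          rw [← h4]
          linarith [hadd2]
        have hexp1 : expMat E (fun u u' => ∑ i, αs i * logMat E (PPP i) u u') y y'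
            = Real.exp (vv y y' + logMat E P₀ y y') := by
          calc expMat E (fun u u' => ∑ i, αs i * logMat E (PPP i) u u') y y'
              = Real.exp (∑ i, αs i * logMat E (PPP i) y y') := Set.indicator_of_mem hE _
            _ = Real.exp (vv y y' + logMat E P₀ y y') := by rw [hGval y y']
        rw [hexp1]
        have hPv : P y y' = Real.exp (Real.log (P y y')) :=
          (Real.exp_log (hP.1.2 y y' hE)).symm
        rw [hPv, hlogP, ← Real.exp_add, ← Real.exp_add, ← Real.exp_sub]
        congr 1
        ring
      · have h0 : P y y' = 0 := hP.1.1 y y' hE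
        have hexp0 : expMat E (fun u u' => ∑ i, αs i * logMat E (PPP i) u u') y y' = 0 :=
          Set.indicator_of_notMem hE _
        rw [h0, hexp0, zero_mul, zero_div]
end

section
/- Let E ⊆ E' ⊆ Y × Y be two edge sets such that W_κ(Y,E) and W_κ(Y,E') are both nonempty (in particular (Y,E) and (Y,E') are strongly connected). Then there exist L ∈ ℕ and edge sets E₀, E₁, …, E_L ⊆ Y × Y such that: (i) E₀ = E and E_L = E'; (ii) E_ℓ ⊊ E_{ℓ+1} for every ℓ < L; (iii) the sequence is consecutive: for every ℓ < L and every E'' with E_ℓ ⊆ E'' ⊆ E_{ℓ+1}, either E'' = E_ℓ, or E'' = E_{ℓ+1}, or W_κ(Y,E'') = ∅; (iv) W_κ(Y,E_ℓ) ≠ ∅ for every ℓ ≤ L; (v) for every ℓ < L, E_{ℓ+1} differs from E_ℓ either by an edge-link or by a block-link. -/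
open Finset

variable {Y X : Type*}

/-- `(y⋆,y⋆')` is an edge-link between `A` and `B`: same lumped edge sets and
`B ∖ A` is a single edge. -/
def EdgeLink (κ : Y → X) (A B : Set (Y × Y)) : Prop :=
  ∃ e : Y × Y, e ∈ B ∧ lumpedEdges B κ = lumpedEdges A κ ∧ B \ A = {e}

/-- `(x⋆,x⋆')` is a block-link between `A` and `B`: the lumped edge sets differ, all new
edges lie in the block `S_{x⋆} × S_{x⋆'}`, and this block is non-merging in `(Y,B)`. -/
def BlockLink (κ : Y → X) (A B : Set (Y × Y)) : Prop :=
  ∃ x x' : X, (x, x') ∈ lumpedEdges B κ ∧ lumpedEdges B κ ≠ lumpedEdges A κ ∧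
    (B \ A ⊆ {p : Y × Y | κ p.1 = x ∧ κ p.2 = x'}) ∧ ¬ MergingBlock B κ x x'

/-- Combinatorial characterization of nonemptiness of `W_κ(Y,E)`:
every vertex has an out-edge, and edge sets are "block-row-uniform". -/
def GoodE (E : Set (Y × Y)) (κ : Y → X) : Prop :=
  (∀ y : Y, ∃ y' : Y, (y, y') ∈ E) ∧
    ∀ y y' : Y, (y, y') ∈ E → ∀ y₁ : Y, κ y₁ = κ y →
      ∃ y₂ : Y, κ y₂ = κ y' ∧ (y₁, y₂) ∈ E

lemma good_of_nonempty [Fintype Y] [DecidableEq X] {E : Set (Y × Y)} {κ : Y → X}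
    (h : (Wkappa E κ).Nonempty) : GoodE E κ := by
  obtain ⟨P, ⟨⟨⟨hsupp, hpos⟩, hrow⟩, hlump⟩⟩ := h
  have hnn : ∀ y y' : Y, 0 ≤ P y y' := fun y y' => by
    by_cases hm : (y, y') ∈ E
    · exact (hpos y y' hm).le
    · exact le_of_eq (hsupp y y' hm).symm
  refine ⟨?_, ?_⟩
  · intro y
    by_contra hc
    push_neg at hc
    have h0 : ∑ y' : Y, P y y' = 0 :=
      Finset.sum_eq_zero fun y' _ => hsupp y y' (hc y')
    rw [hrow y] at h0
    exact one_ne_zero h0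
  · intro y y' hyy' y₁ hκ
    have hedge : (κ y, κ y') ∈ lumpedEdges E κ := ⟨(y, y'), hyy', rfl, rfl⟩
    have h1 : blockSum κ P y₁ (κ y') = blockSum κ P y (κ y') :=
      hlump (κ y) (κ y') hedge y₁ y hκ rfl
    have h2 : 0 < blockSum κ P y (κ y') := by
      refine Finset.sum_pos' (fun i _ => hnn y i) ⟨y', ?_, hpos y y' hyy'⟩
      simp
    rw [← h1] at h2
    simp only [blockSum] at h2
    obtain ⟨y₂, hy₂, hne0⟩ := Finset.exists_ne_zero_of_sum_ne_zero h2.ne'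
    refine ⟨y₂, (Finset.mem_filter.mp hy₂).2, ?_⟩
    by_contra hc
    exact hne0 (hsupp y₁ y₂ hc)

lemma nonempty_of_good [Fintype Y] [Fintype X] [DecidableEq X] {E : Set (Y × Y)} {κ : Y → X}
    (h : GoodE E κ) : (Wkappa E κ).Nonempty := by
  classical
  obtain ⟨h1, h2⟩ := h
  set D : X → ℝ := fun x => ∑ x' : X, if (x, x') ∈ lumpedEdges E κ then (1 : ℝ) else 0
    with hDdef
  set d : Y → X → ℝ := fun y x' => ∑ y' : Y, if κ y' = x' ∧ (y, y') ∈ E then (1 : ℝ) else 0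
    with hddef
  have hDpos : ∀ y : Y, 0 < D (κ y) := by
    intro y
    obtain ⟨y', hy'⟩ := h1 y
    simp only [hDdef]
    refine Finset.sum_pos' (fun i _ => by split <;> norm_num) ⟨κ y', Finset.mem_univ _, ?_⟩
    rw [if_pos ⟨(y, y'), hy', rfl, rfl⟩]
    norm_num
  have hdpos : ∀ (y : Y) (x' : X), (κ y, x') ∈ lumpedEdges E κ → 0 < d y x' := by
    intro y x' hx'
    obtain ⟨q, hqE, hq1, hq2⟩ := hx'
    obtain ⟨y₂, hy₂κ, hy₂E⟩ := h2 q.1 q.2 hqE y hq1.symm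
    simp only [hddef]
    refine Finset.sum_pos' (fun i _ => by split <;> norm_num) ⟨y₂, Finset.mem_univ _, ?_⟩
    rw [if_pos ⟨hy₂κ.trans hq2, hy₂E⟩]
    norm_num
  set P : Y → Y → ℝ := fun y y' =>
    if (y, y') ∈ E then (D (κ y))⁻¹ * (d y (κ y'))⁻¹ else 0 with hPdef
  have hblock : ∀ (y : Y) (x' : X),
      blockSum κ P y x' = if (κ y, x') ∈ lumpedEdges E κ then (D (κ y))⁻¹ else 0 := by
    intro y x'
    have hstep : blockSum κ P y x'
        = ∑ y' : Y, (if κ y' = x' ∧ (y, y') ∈ E then (1 : ℝ) else 0)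
            * ((D (κ y))⁻¹ * (d y x')⁻¹) := by
      simp only [blockSum]
      rw [Finset.sum_filter]
      refine Finset.sum_congr rfl fun y' _ => ?_
      by_cases hy1 : κ y' = x' <;> by_cases hy2 : (y, y') ∈ E <;>
        simp [hPdef, hy1, hy2]
    rw [hstep, ← Finset.sum_mul]
    by_cases hx : (κ y, x') ∈ lumpedEdges E κ
    · rw [if_pos hx]
      have hd : d y x' = ∑ y' : Y, (if κ y' = x' ∧ (y, y') ∈ E then (1 : ℝ) else 0) := by
        rw [hddef]
      rw [← hd, mul_comm (D (κ y))⁻¹, ← mul_assoc,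
        mul_inv_cancel₀ (hdpos y x' hx).ne', one_mul]
    · rw [if_neg hx]
      have hz : ∑ y' : Y, (if κ y' = x' ∧ (y, y') ∈ E then (1 : ℝ) else 0) = 0 := by
        refine Finset.sum_eq_zero fun y' _ => ?_
        rw [if_neg]
        rintro ⟨ha, hb⟩
        exact hx ⟨(y, y'), hb, rfl, ha⟩
      rw [hz, zero_mul]
  refine ⟨P, ⟨⟨⟨?_, ?_⟩, ?_⟩, ?_⟩⟩
  · intro y y' hn
    simp only [hPdef, if_neg hn]
  · intro y y' hm
    simp only [hPdef, if_pos hm]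
    have hD : 0 < D (κ y) := hDpos y
    have hd : 0 < d y (κ y') := hdpos y (κ y') ⟨(y, y'), hm, rfl, rfl⟩
    positivity
  · intro y
    have hfib : ∑ y' : Y, P y y'
        = ∑ x' : X, ∑ y' ∈ Finset.univ.filter (fun y' => κ y' = x'), P y y' :=
      (Finset.sum_fiberwise_of_maps_to (fun y' _ => Finset.mem_univ (κ y'))
        (fun y' => P y y')).symm
    rw [hfib]
    have hcongr : ∀ x' : X, ∑ y' ∈ Finset.univ.filter (fun y' => κ y' = x'), P y y'
        = (if (κ y, x') ∈ lumpedEdges E κ then (1 : ℝ) else 0) * (D (κ y))⁻¹ := by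
      intro x'
      refine (hblock y x').trans ?_
      by_cases hx : (κ y, x') ∈ lumpedEdges E κ <;> simp [hx]
    rw [Finset.sum_congr rfl fun x' _ => hcongr x', ← Finset.sum_mul]
    have hDy : D (κ y) = ∑ x' : X, (if (κ y, x') ∈ lumpedEdges E κ then (1 : ℝ) else 0) := by
      rw [hDdef]
    rw [← hDy, mul_inv_cancel₀ (hDpos y).ne']
  · intro x x' hxx' y₁ y₂ hκ₁ hκ₂
    rw [hblock, hblock, hκ₁, hκ₂]


lemma wkappa_empty_of_not_good [Fintype Y] [DecidableEq X] {E : Set (Y × Y)} {κ : Y → X}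
    (h : ¬ GoodE E κ) : Wkappa E κ = ∅ :=
  Set.eq_empty_iff_forall_notMem.mpr fun P hP => h (good_of_nonempty ⟨P, hP⟩)

/-- One step of the chain: either an edge-link or a block-link extension. -/
lemma step_lemma [Fintype Y] [Fintype X] [DecidableEq X] {E E' : Set (Y × Y)} {κ : Y → X}
    (hsub : E ⊆ E') (hne : E ≠ E') (hg : GoodE E κ) (hg' : GoodE E' κ) :
    ∃ E₁ : Set (Y × Y), E ⊂ E₁ ∧ E₁ ⊆ E' ∧ GoodE E₁ κ ∧
      (EdgeLink κ E E₁ ∨ BlockLink κ E E₁) ∧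
      (∀ E'' : Set (Y × Y), E ⊆ E'' → E'' ⊆ E₁ → E'' = E ∨ E'' = E₁ ∨ ¬ GoodE E'' κ) := by
  classical
  by_cases hcase : ∃ e : Y × Y, e ∈ E' ∧ e ∉ E ∧ (κ e.1, κ e.2) ∈ lumpedEdges E κ
  · obtain ⟨e, heE', heE, helump⟩ := hcase
    refine ⟨insert e E, Set.ssubset_insert heE, Set.insert_subset heE' hsub, ?_, ?_, ?_⟩
    · obtain ⟨hg1, hg2⟩ := hg
      refine ⟨fun y => (hg1 y).imp fun y' hy' => Set.mem_insert_iff.mpr (Or.inr hy'), ?_⟩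
      intro y y' hmem y₁ hκ
      rcases Set.mem_insert_iff.mp hmem with heq | hE
      · obtain ⟨q, hqE, hq1, hq2⟩ := helump
        have hy : y = e.1 := congrArg Prod.fst heq
        have hy' : y' = e.2 := congrArg Prod.snd heq
        obtain ⟨y₂, hy₂κ, hy₂E⟩ := hg2 q.1 q.2 hqE y₁ (by rw [hκ, hy]; exact hq1.symm)
        exact ⟨y₂, by rw [hy']; exact hy₂κ.trans hq2, Set.mem_insert_iff.mpr (Or.inr hy₂E)⟩
      · obtain ⟨y₂, hy₂κ, hy₂E⟩ := hg2 y y' hE y₁ hκ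
        exact ⟨y₂, hy₂κ, Set.mem_insert_iff.mpr (Or.inr hy₂E)⟩
    · left
      refine ⟨e, Set.mem_insert e E, ?_, ?_⟩
      · apply Set.Subset.antisymm
        · rintro ⟨x, x'⟩ ⟨q, hq, h1, h2⟩
          rcases Set.mem_insert_iff.mp hq with rfl | hqE
          · obtain ⟨r, hrE, hr1, hr2⟩ := helump
            exact ⟨r, hrE, hr1.trans h1, hr2.trans h2⟩
          · exact ⟨q, hqE, h1, h2⟩
        · rintro ⟨x, x'⟩ ⟨q, hq, h1, h2⟩
          exact ⟨q, Set.subset_insert e E hq, h1, h2⟩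
      · ext p
        simp only [Set.mem_diff, Set.mem_insert_iff, Set.mem_singleton_iff]
        constructor
        · rintro ⟨rfl | hp, hnp⟩
          · rfl
          · exact absurd hp hnp
        · rintro rfl
          exact ⟨Or.inl rfl, heE⟩
    · intro E'' h1 h2
      by_cases he'' : e ∈ E''
      · exact Or.inr (Or.inl (Set.Subset.antisymm h2 (Set.insert_subset he'' h1)))
      · left
        refine Set.Subset.antisymm ?_ h1
        intro p hp
        rcases Set.mem_insert_iff.mp (h2 hp) with rfl | hpE
        · exact absurd hp he''
        · exact hpE
  · push_neg at hcase
    obtain ⟨e₀, he₀E', he₀E⟩ :=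
      Set.exists_of_ssubset (Set.ssubset_iff_subset_ne.mpr ⟨hsub, hne⟩)
    have hnl : (κ e₀.1, κ e₀.2) ∉ lumpedEdges E κ := hcase e₀ he₀E' he₀E
    have hsel : ∀ y : Y, ∃ y₂ : Y, κ y = κ e₀.1 → (κ y₂ = κ e₀.2 ∧ (y, y₂) ∈ E') := by
      intro y
      by_cases hy : κ y = κ e₀.1
      · obtain ⟨y₂, h₂κ, h₂E⟩ := hg'.2 e₀.1 e₀.2 he₀E' y hy
        exact ⟨y₂, fun _ => ⟨h₂κ, h₂E⟩⟩
      · exact ⟨y, fun hc => absurd hc hy⟩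
    choose g hgspec using hsel
    set N : Set (Y × Y) := {p : Y × Y | κ p.1 = κ e₀.1 ∧ p.2 = g p.1} with hNdef
    have hNmem : ∀ a b : Y, ((a, b) ∈ N ↔ (κ a = κ e₀.1 ∧ b = g a)) := fun a b => Iff.rfl
    have hNE' : N ⊆ E' := by
      intro p hp
      obtain ⟨ha, hb⟩ := (hNmem p.1 p.2).mp hp
      have h' := (hgspec p.1 ha).2
      rw [← hb] at h'
      exact h'
    have hNlump : ∀ p ∈ N, κ p.1 = κ e₀.1 ∧ κ p.2 = κ e₀.2 := by
      intro p hp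
      obtain ⟨ha, hb⟩ := (hNmem p.1 p.2).mp hp
      refine ⟨ha, ?_⟩
      rw [hb]
      exact (hgspec p.1 ha).1
    have hNE : ∀ p ∈ N, p ∉ E := by
      intro p hpN hpE
      obtain ⟨ha, hb⟩ := hNlump p hpN
      exact hnl ⟨p, hpE, ha, hb⟩
    have hdiff : (E ∪ N) \ E = N := by
      ext p
      simp only [Set.mem_diff, Set.mem_union]
      constructor
      · rintro ⟨hp | hp, hnp⟩
        · exact absurd hp hnp
        · exact hp
      · intro hp
        exact ⟨Or.inr hp, hNE p hp⟩
    have he₀N : (e₀.1, g e₀.1) ∈ N := (hNmem _ _).mpr ⟨rfl, rfl⟩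
    have hENss : E ⊂ E ∪ N := by
      refine ⟨Set.subset_union_left, fun hcontra => ?_⟩
      exact hNE _ he₀N (hcontra (Or.inr he₀N))
    have hxx'mem : (κ e₀.1, κ e₀.2) ∈ lumpedEdges (E ∪ N) κ :=
      ⟨(e₀.1, g e₀.1), Or.inr he₀N, rfl, (hgspec e₀.1 rfl).1⟩
    refine ⟨E ∪ N, hENss, Set.union_subset hsub hNE', ?_, Or.inr ?_, ?_⟩
    · refine ⟨fun y => (hg.1 y).imp fun y' hy' => Or.inl hy', ?_⟩
      intro y y' hmem y₁ hκ
      rcases hmem with hE | hN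
      · obtain ⟨y₂, h₂κ, h₂E⟩ := hg.2 y y' hE y₁ hκ
        exact ⟨y₂, h₂κ, Or.inl h₂E⟩
      · obtain ⟨hy, hy'⟩ := (hNmem y y').mp hN
        have hκ₁ : κ y₁ = κ e₀.1 := hκ.trans hy
        refine ⟨g y₁, ?_, Or.inr ((hNmem y₁ (g y₁)).mpr ⟨hκ₁, rfl⟩)⟩
        rw [(hgspec y₁ hκ₁).1, hy']
        exact ((hgspec y hy).1).symm
    · refine ⟨κ e₀.1, κ e₀.2, hxx'mem, ?_, ?_, ?_⟩
      · intro hEqL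
        exact hnl (hEqL ▸ hxx'mem)
      · rw [hdiff]
        intro p hp
        exact hNlump p hp
      · rintro ⟨y, y₁', y₂', hy, h1κ, h2κ, hne', hE1, hE2⟩
        have h1N : (y, y₁') ∈ N := by
          rcases hE1 with hm | hm
          · exact absurd (⟨(y, y₁'), hm, hy, h1κ⟩ :
              (κ e₀.1, κ e₀.2) ∈ lumpedEdges E κ) hnl
          · exact hm
        have h2N : (y, y₂') ∈ N := by
          rcases hE2 with hm | hm
          · exact absurd (⟨(y, y₂'), hm, hy, h2κ⟩ :
              (κ e₀.1, κ e₀.2) ∈ lumpedEdges E κ) hnl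
          · exact hm
        have e1 := ((hNmem y y₁').mp h1N).2
        have e2 := ((hNmem y y₂').mp h2N).2
        exact hne' (e1.trans e2.symm)
    · intro E'' h1 h2
      by_cases hNsub : N ⊆ E''
      · exact Or.inr (Or.inl (Set.Subset.antisymm h2 (Set.union_subset h1 hNsub)))
      · obtain ⟨p, hpN, hpE''⟩ := Set.not_subset.mp hNsub
        obtain ⟨hp1, hp2⟩ := hpN
        by_cases hq : ∃ q, q ∈ N ∧ q ∈ E''
        · obtain ⟨q, hqN, hqE''⟩ := hq
          refine Or.inr (Or.inr ?_)
          rintro ⟨-, hG2⟩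
          obtain ⟨hq1, hq2⟩ := (hNmem q.1 q.2).mp hqN
          obtain ⟨y₂, hy₂κ, hy₂E''⟩ := hG2 q.1 q.2 hqE'' p.1 (hp1.trans hq1.symm)
          have hqκ2 : κ q.2 = κ e₀.2 := by rw [hq2]; exact (hgspec q.1 hq1).1
          have hy₂N : (p.1, y₂) ∈ N := by
            rcases h2 hy₂E'' with hm | hm
            · exact absurd (⟨(p.1, y₂), hm, hp1, hy₂κ.trans hqκ2⟩ :
                (κ e₀.1, κ e₀.2) ∈ lumpedEdges E κ) hnl
            · exact hm
          have hy₂g : y₂ = g p.1 := ((hNmem p.1 y₂).mp hy₂N).2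
          have hpep : (p.1, y₂) = p := Prod.ext_iff.mpr ⟨rfl, hy₂g.trans hp2.symm⟩
          exact hpE'' (hpep ▸ hy₂E'')
        · left
          refine Set.Subset.antisymm ?_ h1
          intro r hr
          rcases h2 hr with hm | hm
          · exact hm
          · exact absurd ⟨r, hm, hr⟩ hq

lemma chain_aux [Fintype Y] [Fintype X] [DecidableEq X] (κ : Y → X) :
    ∀ (n : ℕ) (E E' : Set (Y × Y)), E ⊆ E' → (E' \ E).ncard ≤ n →
      GoodE E κ → GoodE E' κ →
      ∃ (L : ℕ) (Es : ℕ → Set (Y × Y)),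
        Es 0 = E ∧ Es L = E' ∧
        (∀ ℓ < L, Es ℓ ⊂ Es (ℓ + 1)) ∧
        (∀ ℓ < L, ∀ E'' : Set (Y × Y), Es ℓ ⊆ E'' → E'' ⊆ Es (ℓ + 1) →
          E'' = Es ℓ ∨ E'' = Es (ℓ + 1) ∨ Wkappa E'' κ = ∅) ∧
        (∀ ℓ ≤ L, (Wkappa (Es ℓ) κ).Nonempty) ∧
        (∀ ℓ < L, EdgeLink κ (Es ℓ) (Es (ℓ + 1)) ∨ BlockLink κ (Es ℓ) (Es (ℓ + 1))) := by
  intro n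
  induction n with
  | zero =>
    intro E E' hsub hcard hg hg'
    have hEq : E = E' := by
      have h0 : (E' \ E).ncard = 0 := Nat.le_zero.mp hcard
      have hdiff : E' \ E = ∅ := (Set.ncard_eq_zero (Set.toFinite _)).mp h0
      exact Set.Subset.antisymm hsub (Set.diff_eq_empty.mp hdiff)
    exact ⟨0, fun _ => E, rfl, hEq ▸ rfl,
      fun ℓ hℓ => absurd hℓ ℓ.not_lt_zero,
      fun ℓ hℓ => absurd hℓ ℓ.not_lt_zero,
      fun ℓ _ => nonempty_of_good hg,
      fun ℓ hℓ => absurd hℓ ℓ.not_lt_zero⟩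
  | succ n ih =>
    intro E E' hsub hcard hg hg'
    by_cases hEq : E = E'
    · exact ⟨0, fun _ => E, rfl, hEq ▸ rfl,
        fun ℓ hℓ => absurd hℓ ℓ.not_lt_zero,
        fun ℓ hℓ => absurd hℓ ℓ.not_lt_zero,
        fun ℓ _ => nonempty_of_good hg,
        fun ℓ hℓ => absurd hℓ ℓ.not_lt_zero⟩
    · obtain ⟨E₁, hss, hsub₁, hg₁, hlink, hcons⟩ := step_lemma hsub hEq hg hg'
      have hcard₁ : (E' \ E₁).ncard ≤ n := by
        have hpss : E' \ E₁ ⊂ E' \ E := by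
          refine ⟨Set.diff_subset_diff_right hss.subset, fun hcontra => ?_⟩
          obtain ⟨p, hpE₁, hpE⟩ := Set.exists_of_ssubset hss
          have hp' : p ∈ E' \ E := ⟨hsub₁ hpE₁, hpE⟩
          exact (hcontra hp').2 hpE₁
        have := Set.ncard_lt_ncard hpss (Set.toFinite _)
        omega
      obtain ⟨L, Es, hEs0, hEsL, hstrict, hconsec, hnonempty, hlinks⟩ :=
        ih E₁ E' hsub₁ hcard₁ hg₁ hg'
      refine ⟨L + 1, fun ℓ => match ℓ with | 0 => E | (k + 1) => Es k,
        rfl, hEsL, ?_, ?_, ?_, ?_⟩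
      · intro ℓ hℓ
        match ℓ with
        | 0 =>
          show E ⊂ Es 0
          rw [hEs0]
          exact hss
        | (k + 1) => exact hstrict k (by omega)
      · intro ℓ hℓ E'' ha hb
        match ℓ with
        | 0 =>
          have hb' : E'' ⊆ Es 0 := hb
          rw [hEs0] at hb'
          rcases hcons E'' ha hb' with h | h | h
          · exact Or.inl h
          · refine Or.inr (Or.inl ?_)
            show E'' = Es 0
            rw [hEs0]
            exact h
          · exact Or.inr (Or.inr (wkappa_empty_of_not_good h))
        | (k + 1) => exact hconsec k (by omega) E'' ha hb
      · intro ℓ hℓ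
        match ℓ with
        | 0 => exact nonempty_of_good hg
        | (k + 1) => exact hnonempty k (by omega)
      · intro ℓ hℓ
        match ℓ with
        | 0 =>
          show EdgeLink κ E (Es 0) ∨ BlockLink κ E (Es 0)
          rw [hEs0]
          exact hlink
        | (k + 1) => exact hlinks k (by omega)

/-- chaining lemma: any two nested edge sets with nonempty lumpable
families are joined by a strictly increasing, consecutive chain of edge sets with
nonempty lumpable families, each step being an edge-link or a block-link. -/
theorem chaining_lemma [Fintype Y] [Fintype X] [DecidableEq X]
    (E E' : Set (Y × Y)) (κ : Y → X) (hsurj : Function.Surjective κ)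
    (hEE' : E ⊆ E')
    (hconn : StronglyConnected E) (hconn' : StronglyConnected E')
    (hne : (Wkappa E κ).Nonempty) (hne' : (Wkappa E' κ).Nonempty) :
    ∃ (L : ℕ) (Es : ℕ → Set (Y × Y)),
      Es 0 = E ∧ Es L = E' ∧
      (∀ ℓ < L, Es ℓ ⊂ Es (ℓ + 1)) ∧
      (∀ ℓ < L, ∀ E'' : Set (Y × Y), Es ℓ ⊆ E'' → E'' ⊆ Es (ℓ + 1) →
        E'' = Es ℓ ∨ E'' = Es (ℓ + 1) ∨ Wkappa E'' κ = ∅) ∧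
      (∀ ℓ ≤ L, (Wkappa (Es ℓ) κ).Nonempty) ∧
      (∀ ℓ < L, EdgeLink κ (Es ℓ) (Es (ℓ + 1)) ∨ BlockLink κ (Es ℓ) (Es (ℓ + 1))) := by
  exact chain_aux κ (E' \ E).ncard E E' hEE' le_rfl
    (good_of_nonempty hne) (good_of_nonempty hne')
end

section
/- Let E ⊆ E' ⊆ Y × Y be two edge sets such that (Y,E) and (Y,E') are strongly connected and both W_κ(Y,E) and W_κ(Y,E') are nonempty. If W_κ(Y,E') is e-geodesically closed (forms an e-family), then W_κ(Y,E) is e-geodesically closed (forms an e-family). -/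
open Finset

variable {Y X : Type*}

open Matrix in
lemma pf_exists [Fintype Y] [Nonempty Y] (E' : Set (Y × Y))
    (A : Matrix Y Y ℝ)
    (hA0 : ∀ i j, 0 ≤ A i j) (hApos : ∀ i j, (i, j) ∈ E' → 0 < A i j)
    (hconn' : StronglyConnected E') (hout : ∀ i, ∃ j, (i, j) ∈ E') :
    ∃ (ρ : ℝ) (v : Y → ℝ), 0 < ρ ∧ (∀ y, 0 < v y) ∧ (∑ y, v y = 1) ∧
      ∀ y, ∑ y', A y y' * v y' = ρ * v y := by
  classical
  set M : Matrix Y Y ℝ := 1 + A with hM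
  have hM0 : ∀ i j, 0 ≤ M i j := by
    intro i j
    simp only [hM, Matrix.add_apply, Matrix.one_apply]
    split
    · linarith [hA0 i j]
    · simpa using hA0 i j
  have hMge : ∀ i j, A i j ≤ M i j := by
    intro i j
    simp only [hM, Matrix.add_apply, Matrix.one_apply]
    split <;> linarith
  have hMdiag : ∀ j, (1:ℝ) ≤ M j j := by
    intro j
    simp only [hM, Matrix.add_apply, Matrix.one_apply_eq]
    linarith [hA0 j j]
  have hpow0 : ∀ k, ∀ i j, 0 ≤ (M ^ k) i j := by
    intro k
    induction k with
    | zero =>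
      intro i j
      simp only [pow_zero, Matrix.one_apply]
      split <;> norm_num
    | succ k ih =>
      intro i j
      rw [pow_succ, Matrix.mul_apply]
      exact Finset.sum_nonneg fun l _ => mul_nonneg (ih i l) (hM0 l j)
  have hmono : ∀ i j, Monotone fun k => (M ^ k) i j := by
    intro i j
    apply monotone_nat_of_le_succ
    intro k
    rw [pow_succ, Matrix.mul_apply]
    calc (M ^ k) i j = (M ^ k) i j * 1 := (mul_one _).symm
      _ ≤ (M ^ k) i j * M j j := mul_le_mul_of_nonneg_left (hMdiag j) (hpow0 k i j)
      _ ≤ ∑ l, (M ^ k) i l * M l j :=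
          Finset.single_le_sum (f := fun l => (M ^ k) i l * M l j)
            (fun l _ => mul_nonneg (hpow0 k i l) (hM0 l j)) (Finset.mem_univ j)
  have hreach : ∀ i j : Y, Relation.ReflTransGen (fun a b => (a, b) ∈ E') i j →
      ∃ k, 0 < (M ^ k) i j := by
    intro i j h
    induction h using Relation.ReflTransGen.head_induction_on with
    | refl => exact ⟨0, by simp⟩
    | head hac hcb ih =>
      obtain ⟨k, hk⟩ := ih
      refine ⟨k + 1, ?_⟩
      rw [pow_succ', Matrix.mul_apply]
      refine Finset.sum_pos' (fun l _ => mul_nonneg (hM0 _ l) (hpow0 k l _)) ?_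
      exact ⟨_, Finset.mem_univ _,
        mul_pos (lt_of_lt_of_le (hApos _ _ hac) (hMge _ _)) hk⟩
  choose kk hkk using fun p : Y × Y => hreach p.1 p.2 (hconn' p.1 p.2)
  set K := Finset.univ.sup kk with hK
  set B := M ^ K with hB
  have hBpos : ∀ i j, 0 < B i j := fun i j =>
    lt_of_lt_of_le (hkk (i, j)) (hmono i j (Finset.le_sup (Finset.mem_univ (i, j))))
  have hcomm : A * B = B * A := by
    have h : Commute A M := (Commute.one_right A).add_right (Commute.refl A)
    exact (h.pow_right K).eq
  have hcont_mulVec : ∀ (C : Matrix Y Y ℝ), Continuous fun v : Y → ℝ => C.mulVec v := by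
    intro C
    refine continuous_pi fun i => ?_
    simp only [Matrix.mulVec, dotProduct]
    exact continuous_finset_sum _ fun j _ => continuous_const.mul (continuous_apply j)
  have hmv : ∀ (C : Matrix Y Y ℝ) (v : Y → ℝ) (i : Y), C.mulVec v i = ∑ j, C i j * v j := by
    intro C v i; rfl
  have hmv_nonneg : ∀ (C : Matrix Y Y ℝ), (∀ i j, 0 ≤ C i j) → ∀ (v : Y → ℝ),
      (∀ j, 0 ≤ v j) → ∀ i, 0 ≤ C.mulVec v i := by
    intro C hC v hv i
    rw [hmv]
    exact Finset.sum_nonneg fun j _ => mul_nonneg (hC i j) (hv j)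
  set Δ := stdSimplex ℝ Y with hΔ
  have hΔc : IsCompact Δ := isCompact_stdSimplex ℝ Y
  have hΔmem : ∀ v ∈ Δ, (∀ y, 0 ≤ v y) ∧ ∑ y, v y = 1 := fun v hv => hv
  have hΔex : ∀ v ∈ Δ, ∃ j, 0 < v j := by
    intro v hv
    by_contra h
    push_neg at h
    have : ∑ y, v y = 0 := Finset.sum_eq_zero fun y _ => le_antisymm (h y) ((hΔmem v hv).1 y)
    rw [(hΔmem v hv).2] at this
    norm_num at this
  set sfun : (Y → ℝ) → ℝ := fun v => ∑ i, B.mulVec v i with hsfun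
  have hscont : Continuous sfun :=
    continuous_finset_sum _ fun i _ => (continuous_apply i).comp (hcont_mulVec B)
  have hBv_pos : ∀ v ∈ Δ, ∀ i, 0 < B.mulVec v i := by
    intro v hv i
    obtain ⟨j, hj⟩ := hΔex v hv
    rw [hmv]
    refine Finset.sum_pos' (fun l _ => mul_nonneg (hBpos i l).le ((hΔmem v hv).1 l)) ?_
    exact ⟨j, Finset.mem_univ j, mul_pos (hBpos i j) hj⟩
  have hspos : ∀ v ∈ Δ, 0 < sfun v := by
    intro v hv
    exact Finset.sum_pos (fun i _ => hBv_pos v hv i) Finset.univ_nonempty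
  set T : (Y → ℝ) → (Y → ℝ) := fun v => (sfun v)⁻¹ • B.mulVec v with hT
  have hTpos : ∀ v ∈ Δ, ∀ y, 0 < T v y := by
    intro v hv y
    exact mul_pos (inv_pos.mpr (hspos v hv)) (hBv_pos v hv y)
  have hTmem : ∀ v ∈ Δ, T v ∈ Δ := by
    intro v hv
    refine ⟨fun y => (hTpos v hv y).le, ?_⟩
    have : ∑ y, T v y = (sfun v)⁻¹ * ∑ y, B.mulVec v y := by
      simp [hT, Finset.mul_sum]
    rw [this]
    exact inv_mul_cancel₀ (hspos v hv).ne'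
  set Khat := T '' Δ with hKhat
  have hTcont : ContinuousOn T Δ :=
    ContinuousOn.smul (ContinuousOn.inv₀ hscont.continuousOn fun v hv => (hspos v hv).ne')
      (hcont_mulVec B).continuousOn
  have hKc : IsCompact Khat := hΔc.image_of_continuousOn hTcont
  have hKsub : Khat ⊆ Δ := by
    rintro v ⟨w, hw, rfl⟩
    exact hTmem w hw
  have hKpos : ∀ v ∈ Khat, ∀ y, 0 < v y := by
    rintro v ⟨w, hw, rfl⟩ y
    exact hTpos w hw y
  have hKne : Khat.Nonempty := by
    refine ⟨T (fun _ => (Fintype.card Y : ℝ)⁻¹), Set.mem_image_of_mem _ ?_⟩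
    constructor
    · intro y
      positivity
    · have : (0:ℝ) < (Fintype.card Y : ℝ) := by positivity
      simp [Finset.card_univ, mul_inv_cancel₀ this.ne']
  set C : ℝ := (∑ i, ∑ j, A i j) + 1 with hCdef
  have hC0 : (0:ℝ) ≤ C := by
    have : (0:ℝ) ≤ ∑ i, ∑ j, A i j :=
      Finset.sum_nonneg fun i _ => Finset.sum_nonneg fun j _ => hA0 i j
    linarith
  have hbound : ∀ v ∈ Δ, ∀ r : ℝ, 0 ≤ r → (∀ y, r * v y ≤ A.mulVec v y) → r ≤ C := by
    intro v hv r hr hle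
    have hv1 : ∀ j, v j ≤ 1 := by
      intro j
      rw [← (hΔmem v hv).2]
      exact Finset.single_le_sum (fun y _ => (hΔmem v hv).1 y) (Finset.mem_univ j)
    have h1 : r = ∑ y, r * v y := by
      rw [← Finset.mul_sum, (hΔmem v hv).2, mul_one]
    have h2 : ∑ y, r * v y ≤ ∑ y, A.mulVec v y :=
      Finset.sum_le_sum fun y _ => hle y
    have h3 : ∑ y, A.mulVec v y ≤ ∑ i, ∑ j, A i j := by
      refine Finset.sum_le_sum fun i _ => ?_
      rw [hmv]
      refine Finset.sum_le_sum fun j _ => ?_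
      exact mul_le_of_le_one_right (hA0 i j) (hv1 j)
    linarith
  set S : Set ((Y → ℝ) × ℝ) :=
    {p | p.1 ∈ Khat ∧ p.2 ∈ Set.Icc 0 C ∧ ∀ y, p.2 * p.1 y ≤ A.mulVec p.1 y} with hSdef
  have hSc : IsCompact S := by
    have heq : S = (Khat ×ˢ Set.Icc 0 C) ∩
        ⋂ y, {p : (Y → ℝ) × ℝ | p.2 * p.1 y ≤ A.mulVec p.1 y} := by
      ext p
      simp only [hSdef, Set.mem_setOf_eq, Set.mem_inter_iff, Set.mem_prod, Set.mem_iInter]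
      tauto
    rw [heq]
    refine (hKc.prod isCompact_Icc).inter_right (isClosed_iInter fun y => ?_)
    refine isClosed_le ?_ ?_
    · exact continuous_snd.mul ((continuous_apply y).comp continuous_fst)
    · exact (continuous_apply y).comp ((hcont_mulVec A).comp continuous_fst)
  have hSne : S.Nonempty := by
    obtain ⟨v₀, hv₀⟩ := hKne
    refine ⟨(v₀, 0), hv₀, ⟨le_refl 0, hC0⟩, fun y => ?_⟩
    rw [zero_mul]
    exact hmv_nonneg A hA0 v₀ (fun j => (hKpos v₀ hv₀ j).le) y
  obtain ⟨p, hpS, hpmax⟩ := hSc.exists_isMaxOn hSne continuous_snd.continuousOn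
  obtain ⟨hpK, hpIcc, hple⟩ := hpS
  set v := p.1 with hvdef
  set r := p.2 with hrdef
  have hvΔ : v ∈ Δ := hKsub hpK
  have hvpos : ∀ y, 0 < v y := hKpos v hpK
  have heig : ∀ y, A.mulVec v y = r * v y := by
    by_contra hcon
    push_neg at hcon
    obtain ⟨y₀, hy₀⟩ := hcon
    have hy₀' : r * v y₀ < A.mulVec v y₀ := lt_of_le_of_ne (hple y₀) (Ne.symm hy₀)
    set w : Y → ℝ := A.mulVec v - r • v with hwdef
    have hw0 : ∀ y, 0 ≤ w y := by
      intro y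
      simp only [hwdef, Pi.sub_apply, Pi.smul_apply, smul_eq_mul, sub_nonneg]
      exact hple y
    have hwy₀ : 0 < w y₀ := by
      simp only [hwdef, Pi.sub_apply, Pi.smul_apply, smul_eq_mul, sub_pos]
      exact hy₀'
    set z := B.mulVec v with hzdef
    have hzpos : ∀ y, 0 < z y := hBv_pos v hvΔ
    have hBw : ∀ y, 0 < B.mulVec w y := by
      intro y
      rw [hmv]
      refine Finset.sum_pos' (fun l _ => mul_nonneg (hBpos y l).le (hw0 l)) ?_
      exact ⟨y₀, Finset.mem_univ y₀, mul_pos (hBpos y y₀) hwy₀⟩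
    have hkey : B.mulVec w = A.mulVec z - r • z := by
      rw [hwdef, Matrix.mulVec_sub, Matrix.mulVec_smul, hzdef,
        Matrix.mulVec_mulVec, ← hcomm, ← Matrix.mulVec_mulVec]
    have hz_strict : ∀ y, r * z y < A.mulVec z y := by
      intro y
      have := hBw y
      rw [hkey] at this
      simp only [Pi.sub_apply, Pi.smul_apply, smul_eq_mul, sub_pos] at this
      exact this
    set u := T v with hudef
    have huK : u ∈ Khat := Set.mem_image_of_mem T hvΔ
    have hupos : ∀ y, 0 < u y := hKpos u huK
    have huz : u = (sfun v)⁻¹ • z := rfl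
    have hsv : 0 < sfun v := hspos v hvΔ
    have hu_strict : ∀ y, r * u y < A.mulVec u y := by
      intro y
      rw [huz, Matrix.mulVec_smul]
      simp only [Pi.smul_apply, smul_eq_mul]
      calc r * ((sfun v)⁻¹ * z y) = (sfun v)⁻¹ * (r * z y) := by ring
        _ < (sfun v)⁻¹ * A.mulVec z y :=
            mul_lt_mul_of_pos_left (hz_strict y) (inv_pos.mpr hsv)
    set r' := Finset.univ.inf' Finset.univ_nonempty (fun y => A.mulVec u y / u y) with hr'def
    have hr'_gt : r < r' := by
      rw [hr'def, Finset.lt_inf'_iff]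
      intro y _
      rw [lt_div_iff₀ (hupos y)]
      calc r * u y < A.mulVec u y := hu_strict y
        _ = A.mulVec u y := rfl
    have hr'_feas : ∀ y, r' * u y ≤ A.mulVec u y := by
      intro y
      have h1 : r' ≤ A.mulVec u y / u y := Finset.inf'_le _ (Finset.mem_univ y)
      rw [← le_div_iff₀ (hupos y)]
      exact h1
    have hr'0 : 0 ≤ r' := le_trans hpIcc.1 hr'_gt.le
    have hr'C : r' ≤ C := hbound u (hKsub huK) r' hr'0 hr'_feas
    have : (u, r') ∈ S := ⟨huK, ⟨hr'0, hr'C⟩, hr'_feas⟩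
    have := hpmax this
    simp only [Set.mem_setOf_eq] at this
    exact absurd this (not_le.mpr hr'_gt)
  have hrpos : 0 < r := by
    obtain ⟨y⟩ := ‹Nonempty Y›
    obtain ⟨j, hj⟩ := hout y
    have h1 : 0 < A.mulVec v y := by
      rw [hmv]
      refine Finset.sum_pos' (fun l _ => mul_nonneg (hA0 y l) (hvpos l).le) ?_
      exact ⟨j, Finset.mem_univ j, mul_pos (hApos y j hj) (hvpos j)⟩
    rw [heig y] at h1
    rcases mul_pos_iff.mp h1 with ⟨h, _⟩ | ⟨_, h⟩
    · exact h
    · exact absurd (hvpos y) (not_lt.mpr h.le)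
  refine ⟨r, v, hrpos, hvpos, (hΔmem v hvΔ).2, fun y => ?_⟩
  rw [← hmv, heig y]

/-- Comparison of eigenvalues of positive eigenvectors. -/
lemma eig_le [Fintype Y] [Nonempty Y]
    (F : Y → Y → ℝ) (hF0 : ∀ i j, 0 ≤ F i j)
    (ρ σ : ℝ) (v w : Y → ℝ) (hv : ∀ y, 0 < v y) (hw : ∀ y, 0 < w y)
    (hev : ∀ y, ∑ y', F y y' * v y' = ρ * v y)
    (hew : ∀ y, ∑ y', F y y' * w y' = σ * w y) : σ ≤ ρ := by
  obtain ⟨ys, -, hys⟩ := Finset.exists_max_image Finset.univ (fun y => w y / v y)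
    Finset.univ_nonempty
  have hkey : σ * w ys ≤ ρ * w ys := by
    calc σ * w ys = ∑ y', F ys y' * w y' := (hew ys).symm
      _ ≤ ∑ y', F ys y' * (v y' * (w ys / v ys)) := by
          refine Finset.sum_le_sum fun j _ => ?_
          refine mul_le_mul_of_nonneg_left ?_ (hF0 ys j)
          have h1 : w j / v j ≤ w ys / v ys := hys j (Finset.mem_univ j)
          calc w j = v j * (w j / v j) := by
                rw [mul_div_cancel₀ _ (hv j).ne']
            _ ≤ v j * (w ys / v ys) := mul_le_mul_of_nonneg_left h1 (hv j).le
      _ = (w ys / v ys) * ∑ y', F ys y' * v y' := by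
          rw [Finset.mul_sum]; congr 1; ext j; ring
      _ = (w ys / v ys) * (ρ * v ys) := by rw [hev ys]
      _ = ρ * w ys := by
          rw [div_mul_eq_mul_div]
          rw [show w ys * (ρ * v ys) = (ρ * w ys) * v ys by ring]
          rw [mul_div_cancel_right₀ _ (hv ys).ne']
  exact le_of_mul_le_mul_right (by linarith [hkey]) (hw ys)

/-- With equal eigenvalue, positive eigenvectors are proportional (irreducible case). -/
lemma eig_const [Fintype Y] [Nonempty Y] (E : Set (Y × Y))
    (hconn : StronglyConnected E)
    (F : Y → Y → ℝ) (hF0 : ∀ i j, 0 ≤ F i j) (hFpos : ∀ i j, (i, j) ∈ E → 0 < F i j)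
    (ρ : ℝ) (v w : Y → ℝ) (hρ : 0 < ρ) (hv : ∀ y, 0 < v y) (hw : ∀ y, 0 < w y)
    (hev : ∀ y, ∑ y', F y y' * v y' = ρ * v y)
    (hew : ∀ y, ∑ y', F y y' * w y' = ρ * w y) :
    ∃ c : ℝ, 0 < c ∧ ∀ y, w y = c * v y := by
  obtain ⟨ys, -, hys⟩ := Finset.exists_max_image Finset.univ (fun y => w y / v y)
    Finset.univ_nonempty
  set c := w ys / v ys with hc
  have hcpos : 0 < c := div_pos (hw ys) (hv ys)
  have hle : ∀ y, w y ≤ c * v y := by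
    intro y
    have h1 : w y / v y ≤ c := hys y (Finset.mem_univ y)
    calc w y = (w y / v y) * v y := by rw [div_mul_cancel₀ _ (hv y).ne']
      _ ≤ c * v y := mul_le_mul_of_nonneg_right h1 (hv y).le
  -- at any point where the max ratio is attained, it propagates along edges
  have hstep : ∀ z, w z = c * v z → ∀ j, (z, j) ∈ E → w j = c * v j := by
    intro z hz j hj
    have hsum : ∑ y', F z y' * (c * v y' - w y') = 0 := by
      have : ∑ y', F z y' * (c * v y' - w y')
          = c * (∑ y', F z y' * v y') - ∑ y', F z y' * w y' := by
        rw [Finset.mul_sum, ← Finset.sum_sub_distrib]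
        congr 1; ext y'; ring
      rw [this, hev, hew, hz]
      ring
    have hterm : ∀ y' ∈ Finset.univ, 0 ≤ F z y' * (c * v y' - w y') := by
      intro y' _
      exact mul_nonneg (hF0 z y') (by linarith [hle y'])
    have := (Finset.sum_eq_zero_iff_of_nonneg hterm).mp hsum j (Finset.mem_univ j)
    rcases mul_eq_zero.mp this with h | h
    · exact absurd h (hFpos z j hj).ne'
    · linarith
  have hall : ∀ z, w z = c * v z := by
    have hbase : w ys = c * v ys := by
      rw [hc, div_mul_cancel₀ _ (hv ys).ne']
    intro z
    have hpath := hconn ys z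
    induction hpath with
    | refl => exact hbase
    | tail hab hbc ih => exact hstep _ ih _ hbc
  exact ⟨c, hcpos, hall⟩

lemma isSNorm_eigen [Fintype Y] {F Q : Y → Y → ℝ} {ρ : ℝ} {v : Y → ℝ}
    (hρ : 0 < ρ) (hv : ∀ y, 0 < v y)
    (hQ : ∀ y y', Q y y' = F y y' * v y' / (ρ * v y)) (hrs : ∀ y, ∑ y', Q y y' = 1) :
    ∀ y, ∑ y', F y y' * v y' = ρ * v y := by
  intro y
  have h1 : ∑ y', F y y' * v y' / (ρ * v y) = 1 := by
    rw [← hrs y]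
    exact Finset.sum_congr rfl fun y' _ => (hQ y y').symm
  have h2 : (∑ y', F y y' * v y') / (ρ * v y) = 1 := by
    rw [← h1, Finset.sum_div]
  have h3 : ρ * v y ≠ 0 := (mul_pos hρ (hv y)).ne'
  rw [div_eq_one_iff_eq h3] at h2
  exact h2


lemma snorm_unique [Fintype Y] [Nonempty Y] (E : Set (Y × Y))
    (hconn : StronglyConnected E)
    (F : Y → Y → ℝ) (hF0 : ∀ i j, 0 ≤ F i j) (hFpos : ∀ i j, (i, j) ∈ E → 0 < F i j)
    {Q Q' : Y → Y → ℝ} (h1 : IsSNorm F Q) (h2 : IsSNorm F Q') : Q = Q' := by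
  obtain ⟨ρ, v, hρ, hv, hQ, hrs⟩ := h1
  obtain ⟨σ, w, hσ, hw, hQ', hrs'⟩ := h2
  have hev := isSNorm_eigen hρ hv hQ hrs
  have hew := isSNorm_eigen hσ hw hQ' hrs'
  have hσρ : σ = ρ :=
    le_antisymm (eig_le F hF0 ρ σ v w hv hw hev hew) (eig_le F hF0 σ ρ w v hw hv hew hev)
  obtain ⟨c, hc, hwc⟩ := eig_const E hconn F hF0 hFpos ρ v w hρ hv hw hev (hσρ ▸ hew)
  funext y y'
  rw [hQ y y', hQ' y y', hσρ, hwc y, hwc y']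
  rw [mul_comm c (v y'), mul_comm c (v y), ← mul_assoc, mul_comm ρ (v y * c)]
  rw [show v y * c * ρ = ρ * v y * c by ring, mul_div_mul_right _ _ hc.ne']

lemma memW_exists_edge [Fintype Y] {E : Set (Y × Y)} {P : Y → Y → ℝ} (hP : MemW E P) :
    ∀ y, ∃ y', (y, y') ∈ E := by
  intro y
  by_contra h
  push_neg at h
  have h0 : ∑ y', P y y' = 0 := Finset.sum_eq_zero fun y' _ => hP.1.1 y y' (h y')
  rw [hP.2 y] at h0
  norm_num at h0

lemma mix_mem [Fintype Y] [Fintype X] [DecidableEq X] {E E' : Set (Y × Y)} {κ : Y → X}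
    (hEE' : E ⊆ E') {P R : Y → Y → ℝ} (hP : P ∈ Wkappa E κ) (hR : R ∈ Wkappa E' κ)
    {ε : ℝ} (hε : 0 < ε) :
    (fun y y' => (P y y' + ε * R y y') / (1 + ε)) ∈ Wkappa E' κ := by
  obtain ⟨⟨⟨hPF, hPpos⟩, hPrs⟩, hPlump⟩ := hP
  obtain ⟨⟨⟨hRF, hRpos⟩, hRrs⟩, hRlump⟩ := hR
  have h1ε : (0:ℝ) < 1 + ε := by linarith
  have hP0 : ∀ y y', 0 ≤ P y y' := by
    intro y y'
    by_cases h : (y, y') ∈ E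
    · exact (hPpos y y' h).le
    · rw [hPF y y' h]
  refine ⟨⟨⟨?_, ?_⟩, ?_⟩, ?_⟩
  · intro y y' h
    show (P y y' + ε * R y y') / (1 + ε) = 0
    rw [hPF y y' (fun hE => h (hEE' hE)), hRF y y' h]
    simp
  · intro y y' h
    show 0 < (P y y' + ε * R y y') / (1 + ε)
    have h1 := hRpos y y' h
    have h2 := hP0 y y'
    positivity
  · intro y
    show ∑ y', (P y y' + ε * R y y') / (1 + ε) = 1
    rw [← Finset.sum_div, Finset.sum_add_distrib, ← Finset.mul_sum, hPrs y, hRrs y]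
    field_simp
  · intro x x' hxx' y₁ y₂ h1 h2
    have hblock : ∀ y, blockSum κ (fun y y' => (P y y' + ε * R y y') / (1 + ε)) y x'
        = (blockSum κ P y x' + ε * blockSum κ R y x') / (1 + ε) := by
      intro y
      unfold blockSum
      rw [← Finset.sum_div, Finset.sum_add_distrib, Finset.mul_sum]
    rw [hblock y₁, hblock y₂]
    have hRpart := hRlump x x' hxx' y₁ y₂ h1 h2
    by_cases hE : (x, x') ∈ lumpedEdges E κ
    · rw [hPlump x x' hE y₁ y₂ h1 h2, hRpart]
    · have hP0' : ∀ y, κ y = x → blockSum κ P y x' = 0 := by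
        intro y hy
        refine Finset.sum_eq_zero fun y' hy' => ?_
        rw [Finset.mem_filter] at hy'
        exact hPF y y' fun hmem => hE ⟨(y, y'), hmem, hy, hy'.2⟩
      rw [hP0' y₁ h1, hP0' y₂ h2, hRpart]

/-- monotonicity: for nested edge sets `E ⊆ E'` with nonempty lumpable
families, if `W_κ(Y,E')` is e-geodesically closed (forms an e-family), then so is
`W_κ(Y,E)`. -/
theorem monotonicity_of_eFamilies [Fintype Y] [Fintype X] [DecidableEq X]
    (E E' : Set (Y × Y)) (κ : Y → X) (hsurj : Function.Surjective κ)
    (hEE' : E ⊆ E')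
    (hconn : StronglyConnected E) (hconn' : StronglyConnected E')
    (hne : (Wkappa E κ).Nonempty) (hne' : (Wkappa E' κ).Nonempty)
    (hfam' : EGeodClosed E' (Wkappa E' κ)) :
    EGeodClosed E (Wkappa E κ) := by
  classical
  intro P₀ hP₀ P₁ hP₁ t Q hQ
  rcases isEmpty_or_nonempty Y with hY | hY
  · exact ⟨⟨⟨fun y => isEmptyElim y, fun y => isEmptyElim y⟩, fun y => isEmptyElim y⟩,
      fun x x' _ y₁ => isEmptyElim y₁⟩
  obtain ⟨R, hR⟩ := hne'
  have hP₀F : MemF E P₀ := hP₀.1.1.1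
  have hP₀pos := hP₀.1.1.2
  have hP₁F : MemF E P₁ := hP₁.1.1.1
  have hP₁pos := hP₁.1.1.2
  set M := hadGeom E P₀ P₁ t with hMdef
  have hMoff : ∀ y y', (y, y') ∉ E → M y y' = 0 := by
    intro y y' h
    exact Set.indicator_of_notMem h _
  have hMon : ∀ y y', (y, y') ∈ E → M y y' = P₀ y y' ^ (1 - t) * P₁ y y' ^ t := by
    intro y y' h
    exact Set.indicator_of_mem h _
  have hMpos : ∀ y y', (y, y') ∈ E → 0 < M y y' := by
    intro y y' h
    rw [hMon y y' h]
    exact mul_pos (Real.rpow_pos_of_pos (hP₀pos y y' h) _)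
      (Real.rpow_pos_of_pos (hP₁pos y y' h) _)
  have hM0 : ∀ y y', 0 ≤ M y y' := by
    intro y y'
    by_cases h : (y, y') ∈ E
    · exact (hMpos y y' h).le
    · rw [hMoff y y' h]
  obtain ⟨ρq, vq, hρq, hvq, hQeq, hQrs⟩ := hQ
  have hQmemW : MemW E Q := by
    refine ⟨⟨?_, ?_⟩, hQrs⟩
    · intro y y' h
      rw [hQeq y y', hMoff y y' h, zero_mul, zero_div]
    · intro y y' h
      rw [hQeq y y']
      exact div_pos (mul_pos (hMpos y y' h) (hvq y')) (mul_pos hρq (hvq y))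
  refine ⟨hQmemW, ?_⟩
  -- approximating sequence inside `W_κ(Y, E')`
  set ε : ℕ → ℝ := fun n => 1 / (n + 1) with hεdef
  have hεpos : ∀ n, 0 < ε n := by
    intro n
    have : (0:ℝ) < (n:ℝ) + 1 := by positivity
    exact div_pos one_pos this
  have hεlim : Filter.Tendsto ε Filter.atTop (nhds 0) :=
    tendsto_one_div_add_atTop_nhds_zero_nat
  set Pm : (Y → Y → ℝ) → ℕ → Y → Y → ℝ :=
    fun P n y y' => (P y y' + ε n * R y y') / (1 + ε n) with hPmdef
  have hPm₀ : ∀ n, Pm P₀ n ∈ Wkappa E' κ := fun n => mix_mem hEE' hP₀ hR (hεpos n)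
  have hPm₁ : ∀ n, Pm P₁ n ∈ Wkappa E' κ := fun n => mix_mem hEE' hP₁ hR (hεpos n)
  set Mn : ℕ → Y → Y → ℝ := fun n => hadGeom E' (Pm P₀ n) (Pm P₁ n) t with hMndef
  have hMnon : ∀ n y y', (y, y') ∈ E' →
      Mn n y y' = Pm P₀ n y y' ^ (1 - t) * Pm P₁ n y y' ^ t := by
    intro n y y' h
    exact Set.indicator_of_mem h _
  have hMnoff : ∀ n y y', (y, y') ∉ E' → Mn n y y' = 0 := by
    intro n y y' h
    exact Set.indicator_of_notMem h _
  have hMnpos : ∀ n y y', (y, y') ∈ E' → 0 < Mn n y y' := by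
    intro n y y' h
    rw [hMnon n y y' h]
    exact mul_pos (Real.rpow_pos_of_pos ((hPm₀ n).1.1.2 y y' h) _)
      (Real.rpow_pos_of_pos ((hPm₁ n).1.1.2 y y' h) _)
  have hMn0 : ∀ n y y', 0 ≤ Mn n y y' := by
    intro n y y'
    by_cases h : (y, y') ∈ E'
    · exact (hMnpos n y y' h).le
    · rw [hMnoff n y y' h]
  have hout' : ∀ i, ∃ j, (i, j) ∈ E' := memW_exists_edge hR.1
  choose ρn vn hρn hvn hvnsum heign using fun n =>
    pf_exists E' (Mn n) (hMn0 n) (hMnpos n) hconn' hout'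
  set Qn : ℕ → Y → Y → ℝ := fun n y y' => Mn n y y' * vn n y' / (ρn n * vn n y) with hQndef
  have hQnrs : ∀ n, RowStochastic (Qn n) := by
    intro n y
    have h3 : ρn n * vn n y ≠ 0 := (mul_pos (hρn n) (hvn n y)).ne'
    have : ∑ y', Qn n y y' = (∑ y', Mn n y y' * vn n y') / (ρn n * vn n y) :=
      (Finset.sum_div _ _ _).symm
    rw [this, heign n y, div_self h3]
  have hQnsn : ∀ n, IsSNorm (Mn n) (Qn n) :=
    fun n => ⟨ρn n, vn n, hρn n, hvn n, fun y y' => rfl, hQnrs n⟩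
  have hQnW : ∀ n, Qn n ∈ Wkappa E' κ :=
    fun n => hfam' _ (hPm₀ n) _ (hPm₁ n) t (Qn n) (hQnsn n)
  -- entrywise convergence of the mixtures and of `Mn` to `M`
  have hbase : ∀ (P : Y → Y → ℝ) (y y' : Y),
      Filter.Tendsto (fun n => Pm P n y y') Filter.atTop (nhds (P y y')) := by
    intro P y y'
    have h1 : Filter.Tendsto (fun n => P y y' + ε n * R y y') Filter.atTop
        (nhds (P y y' + 0 * R y y')) :=
      tendsto_const_nhds.add (hεlim.mul tendsto_const_nhds)
    have h2 : Filter.Tendsto (fun n => 1 + ε n) Filter.atTop (nhds (1 + 0)) :=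
      tendsto_const_nhds.add hεlim
    have h3 : Filter.Tendsto (fun n => (P y y' + ε n * R y y') / (1 + ε n)) Filter.atTop
        (nhds ((P y y' + 0 * R y y') / (1 + 0))) := h1.div h2 (by norm_num)
    simpa using h3
  have hMtend : ∀ y y',
      Filter.Tendsto (fun n => Mn n y y') Filter.atTop (nhds (M y y')) := by
    intro y y'
    by_cases hE : (y, y') ∈ E
    · have hE' : (y, y') ∈ E' := hEE' hE
      have h0 : Filter.Tendsto (fun n => Pm P₀ n y y' ^ (1 - t)) Filter.atTop
          (nhds (P₀ y y' ^ (1 - t))) :=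
        ((Real.continuousAt_rpow_const _ _ (Or.inl (hP₀pos y y' hE).ne')).tendsto).comp
          (hbase P₀ y y')
      have h1 : Filter.Tendsto (fun n => Pm P₁ n y y' ^ t) Filter.atTop
          (nhds (P₁ y y' ^ t)) :=
        ((Real.continuousAt_rpow_const _ _ (Or.inl (hP₁pos y y' hE).ne')).tendsto).comp
          (hbase P₁ y y')
      have h2 := h0.mul h1
      rw [← hMon y y' hE] at h2
      exact h2.congr fun n => (hMnon n y y' hE').symm
    · by_cases hE' : (y, y') ∈ E'
      · have hP₀0 : P₀ y y' = 0 := hP₀F y y' hE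
        have hP₁0 : P₁ y y' = 0 := hP₁F y y' hE
        have hfun : ∀ n, Mn n y y' = ε n * R y y' / (1 + ε n) := by
          intro n
          have hapos : 0 < ε n * R y y' / (1 + ε n) := by
            have hR1 := hR.1.1.2 y y' hE'
            have hεn := hεpos n
            have : (0:ℝ) < 1 + ε n := by linarith
            positivity
          have hPmeq : Pm P₀ n y y' = ε n * R y y' / (1 + ε n) := by
            show (P₀ y y' + ε n * R y y') / (1 + ε n) = _
            rw [hP₀0, zero_add]
          have hPmeq' : Pm P₁ n y y' = ε n * R y y' / (1 + ε n) := by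
            show (P₁ y y' + ε n * R y y') / (1 + ε n) = _
            rw [hP₁0, zero_add]
          rw [hMnon n y y' hE', hPmeq, hPmeq', ← Real.rpow_add hapos, sub_add_cancel,
            Real.rpow_one]
        have h1 : Filter.Tendsto (fun n => ε n * R y y' / (1 + ε n)) Filter.atTop
            (nhds (0 * R y y' / (1 + 0))) :=
          (hεlim.mul tendsto_const_nhds).div (tendsto_const_nhds.add hεlim) (by norm_num)
        rw [hMoff y y' hE]
        simp only [zero_mul, zero_div] at h1
        exact h1.congr fun n => (hfun n).symm
      · have hfun : ∀ n, Mn n y y' = 0 := fun n => hMnoff n y y' hE'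
        rw [hMoff y y' hE]
        simpa [hfun] using (tendsto_const_nhds :
          Filter.Tendsto (fun _ : ℕ => (0:ℝ)) Filter.atTop (nhds 0))
  -- extract a convergent subsequence of the Perron vectors
  have hvmem : ∀ n, vn n ∈ Set.pi Set.univ (fun _ : Y => Set.Icc (0:ℝ) 1) := by
    intro n y _
    refine ⟨(hvn n y).le, ?_⟩
    rw [← hvnsum n]
    exact Finset.single_le_sum (fun z _ => (hvn n z).le) (Finset.mem_univ y)
  have hcomp : IsCompact (Set.pi Set.univ fun _ : Y => Set.Icc (0:ℝ) 1) :=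
    isCompact_univ_pi fun _ => isCompact_Icc
  obtain ⟨vinf, hvinfmem, φ, hφ, hvconv⟩ := hcomp.tendsto_subseq hvmem
  have hφat : Filter.Tendsto φ Filter.atTop Filter.atTop := hφ.tendsto_atTop
  have hvc : ∀ y, Filter.Tendsto (fun n => vn (φ n) y) Filter.atTop (nhds (vinf y)) :=
    fun y => ((continuous_apply y).tendsto _).comp hvconv
  have hMφ : ∀ y y', Filter.Tendsto (fun n => Mn (φ n) y y') Filter.atTop (nhds (M y y')) :=
    fun y y' => (hMtend y y').comp hφat
  -- limiting eigenvalue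
  set ρinf : ℝ := ∑ y, ∑ j, M y j * vinf j with hρinfdef
  have hρid : ∀ n, ρn n = ∑ y, ∑ j, Mn n y j * vn n j := by
    intro n
    calc ρn n = ρn n * ∑ y, vn n y := by rw [hvnsum n, mul_one]
      _ = ∑ y, ρn n * vn n y := by rw [Finset.mul_sum]
      _ = ∑ y, ∑ j, Mn n y j * vn n j := Finset.sum_congr rfl fun y _ => (heign n y).symm
  have hρconv : Filter.Tendsto (fun n => ρn (φ n)) Filter.atTop (nhds ρinf) := by
    have h1 : Filter.Tendsto (fun n => ∑ y, ∑ j, Mn (φ n) y j * vn (φ n) j)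
        Filter.atTop (nhds ρinf) := by
      refine tendsto_finset_sum _ fun y _ => tendsto_finset_sum _ fun j _ => ?_
      exact (hMφ y j).mul (hvc j)
    exact h1.congr fun n => (hρid (φ n)).symm
  have heiginf : ∀ y, ∑ j, M y j * vinf j = ρinf * vinf y := by
    intro y
    have hL : Filter.Tendsto (fun n => ∑ j, Mn (φ n) y j * vn (φ n) j) Filter.atTop
        (nhds (∑ j, M y j * vinf j)) :=
      tendsto_finset_sum _ fun j _ => (hMφ y j).mul (hvc j)
    have hR' : Filter.Tendsto (fun n => ρn (φ n) * vn (φ n) y) Filter.atTop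
        (nhds (ρinf * vinf y)) := hρconv.mul (hvc y)
    have hfn : (fun n => ∑ j, Mn (φ n) y j * vn (φ n) j)
        = fun n => ρn (φ n) * vn (φ n) y := funext fun n => heign (φ n) y
    exact tendsto_nhds_unique (hfn ▸ hL) hR'
  have hvinf0 : ∀ y, 0 ≤ vinf y := fun y => (hvinfmem y (Set.mem_univ y)).1
  have hvinfsum : ∑ y, vinf y = 1 := by
    have h1 : Filter.Tendsto (fun n => ∑ y, vn (φ n) y) Filter.atTop (nhds (∑ y, vinf y)) :=
      tendsto_finset_sum _ fun y _ => hvc y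
    have h2 : (fun n => ∑ y, vn (φ n) y) = fun _ => (1:ℝ) := funext fun n => hvnsum (φ n)
    exact tendsto_nhds_unique (h2 ▸ h1) tendsto_const_nhds
  have hρinf0 : 0 ≤ ρinf :=
    Finset.sum_nonneg fun y _ => Finset.sum_nonneg fun j _ =>
      mul_nonneg (hM0 y j) (hvinf0 j)
  have hex : ∃ y, 0 < vinf y := by
    by_contra h
    push_neg at h
    have : ∑ y, vinf y = 0 :=
      Finset.sum_eq_zero fun y _ => le_antisymm (h y) (hvinf0 y)
    rw [hvinfsum] at this
    norm_num at this
  obtain ⟨y₀, hy₀⟩ := hex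
  have hprop : ∀ a b, (a, b) ∈ E → 0 < vinf b → 0 < ρinf ∧ 0 < vinf a := by
    intro a b hab hb
    have h1 : 0 < ∑ j, M a j * vinf j := by
      refine Finset.sum_pos' (fun j _ => mul_nonneg (hM0 a j) (hvinf0 j)) ?_
      exact ⟨b, Finset.mem_univ b, mul_pos (hMpos a b hab) hb⟩
    rw [heiginf a] at h1
    rcases mul_pos_iff.mp h1 with ⟨h2, h3⟩ | ⟨h2, h3⟩
    · exact ⟨h2, h3⟩
    · exact absurd (hvinf0 a) (not_le.mpr h3)
  have hvinfpos : ∀ z, 0 < vinf z := by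
    intro z
    have hpath := hconn z y₀
    induction hpath using Relation.ReflTransGen.head_induction_on with
    | refl => exact hy₀
    | head hac hcb ih => exact (hprop _ _ hac ih).2
  have hρinfpos : 0 < ρinf := by
    obtain ⟨y⟩ := hY
    obtain ⟨j, hj⟩ := memW_exists_edge hP₀.1 y
    exact (hprop y j hj (hvinfpos j)).1
  -- the limiting s-normalization
  set Qinf : Y → Y → ℝ := fun y y' => M y y' * vinf y' / (ρinf * vinf y) with hQinfdef
  have hQinfrs : RowStochastic Qinf := by
    intro y
    have h3 : ρinf * vinf y ≠ 0 := (mul_pos hρinfpos (hvinfpos y)).ne'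
    have h4 : ∑ y', Qinf y y' = (∑ y', M y y' * vinf y') / (ρinf * vinf y) :=
      (Finset.sum_div _ _ _).symm
    rw [h4, heiginf y, div_self h3]
  have hQinfsn : IsSNorm M Qinf :=
    ⟨ρinf, vinf, hρinfpos, hvinfpos, fun y y' => rfl, hQinfrs⟩
  have hQsn : IsSNorm M Q := ⟨ρq, vq, hρq, hvq, hQeq, hQrs⟩
  have hQQinf : Q = Qinf := snorm_unique E hconn M hM0 hMpos hQsn hQinfsn
  -- entrywise convergence of the s-normalizations
  have hQnconv : ∀ y y',
      Filter.Tendsto (fun n => Qn (φ n) y y') Filter.atTop (nhds (Qinf y y')) := by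
    intro y y'
    have hnum : Filter.Tendsto (fun n => Mn (φ n) y y' * vn (φ n) y') Filter.atTop
        (nhds (M y y' * vinf y')) := (hMφ y y').mul (hvc y')
    have hden : Filter.Tendsto (fun n => ρn (φ n) * vn (φ n) y) Filter.atTop
        (nhds (ρinf * vinf y)) := hρconv.mul (hvc y)
    exact hnum.div hden (mul_pos hρinfpos (hvinfpos y)).ne'
  -- transfer of lumpability through the limit
  rw [hQQinf]
  intro x x' hxx' y₁ y₂ h1 h2
  have hxx'' : (x, x') ∈ lumpedEdges E' κ := by
    obtain ⟨q, hq, hq1, hq2⟩ := hxx'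
    exact ⟨q, hEE' hq, hq1, hq2⟩
  have hn : ∀ n, blockSum κ (Qn (φ n)) y₁ x' = blockSum κ (Qn (φ n)) y₂ x' :=
    fun n => (hQnW (φ n)).2 x x' hxx'' y₁ y₂ h1 h2
  have hb : ∀ y, Filter.Tendsto (fun n => blockSum κ (Qn (φ n)) y x') Filter.atTop
      (nhds (blockSum κ Qinf y x')) := by
    intro y
    exact tendsto_finset_sum _ fun j _ => hQnconv y j
  have hfx : (fun n => blockSum κ (Qn (φ n)) y₁ x')
      = fun n => blockSum κ (Qn (φ n)) y₂ x' := funext hn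
  exact tendsto_nhds_unique (hfx ▸ hb y₁) (hb y₂)
end
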